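/- arXiv:1002.2657 — 7 statements merged into one kernel-verified Lean document; each statement's English description precedes it below -/
import Mathlib

section
/- For any h > 0, the set X = {(e^{jh}, h e^{−h/4} k, h e^{−h/2} m) : j, k ∈ ℤ, m ∈ ℤ²} is Q_h-dense in the shearlet group S; that is, ⋃_{x ∈ X} x·Q_h = S. -/
open MeasureTheory Real Filter Set
open scoped ENNReal
noncomputable section

/-- The parabolic scaling matrix `A_a = diag(a, √a)` acting on `ℝ²`. -/
def Aa (a : ℝ) (t : ℝ × ℝ) : ℝ × ℝ := (a * t.1, Real.sqrt a * t.2)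

/-- The shear matrix `S_s = [[1,s],[0,1]]` acting on `ℝ²`. -/
def Ss (s : ℝ) (t : ℝ × ℝ) : ℝ × ℝ := (t.1 + s * t.2, t.2)

/-- Underlying space of the shearlet group: `(a, s, t₁, t₂)`. -/
abbrev SG := ℝ × ℝ × ℝ × ℝ

/-- Shearlet group multiplication
`(a,s,t)·(a',s',t') = (a'a, s' + s√a', t' + S_{s'} A_{a'} t)`. -/
def smul (p q : SG) : SG :=
  (q.1 * p.1, q.2.1 + p.2.1 * Real.sqrt q.1, q.2.2 + Ss q.2.1 (Aa q.1 p.2.2))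

/-- The box `Q_h = [e^{-h/2}, e^{h/2}) × [-h/2, h/2) × [-h/2, h/2)²`. -/
def Qbox (h : ℝ) : Set SG :=
  Set.Ico (Real.exp (-h/2)) (Real.exp (h/2)) ×ˢ
    (Set.Ico (-h/2) (h/2) ×ˢ (Set.Ico (-h/2) (h/2) ×ˢ Set.Ico (-h/2) (h/2)))

/-- The left-translated box `Q_h(g) = g · Q_h`. -/
def boxAt (h : ℝ) (g : SG) : Set SG := (fun p => smul g p) '' Qbox h

lemma round_mem (c x : ℝ) (hc : 0 < c) :
    ∃ k : ℤ, -(c/2) ≤ x - c*k ∧ x - c*k < c/2 := by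
  refine ⟨⌊x/c + 1/2⌋, ?_, ?_⟩ <;>
  · have h1 : ((⌊x/c + 1/2⌋ : ℤ) : ℝ) ≤ x/c + 1/2 := Int.floor_le _
    have h2 : x/c + 1/2 < (⌊x/c + 1/2⌋ : ℤ) + 1 := Int.lt_floor_add_one _
    have hx : c * (x/c) = x := mul_div_cancel₀ x hc.ne'
    nlinarith

/-- For any `h > 0`, the set `X = {(e^{jh}, h e^{-h/4} k, h e^{-h/2} m)}` is `Q_h`-dense
in the shearlet group: every `g ∈ S` lies in `x · Q_h` for some `x ∈ X`. -/
theorem X_is_Qh_dense (h : ℝ) (hh : 0 < h) (g : SG) (hg : 0 < g.1) :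
    ∃ (j k : ℤ) (m : ℤ × ℤ),
      g ∈ boxAt h (Real.exp (j * h), h * Real.exp (-h/4) * k,
        h * Real.exp (-h/2) * m.1, h * Real.exp (-h/2) * m.2) := by
  obtain ⟨a, s, t1, t2⟩ := g
  simp only at hg
  obtain ⟨j, hj1, hj2⟩ := round_mem h (Real.log a) hh
  set α : ℝ := Real.exp (Real.log a - h * j) with hα
  have hαpos : 0 < α := Real.exp_pos _
  have hsq : Real.sqrt α = Real.exp ((Real.log a - h*j)/2) := by
    rw [Real.exp_half]
  have hsqpos : 0 < Real.sqrt α := Real.sqrt_pos.mpr hαpos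
  -- bounds on α and √α
  have hαlt : α < Real.exp (h/2) := Real.exp_lt_exp.mpr hj2
  have hαge : Real.exp (-(h/2)) ≤ α := Real.exp_le_exp.mpr hj1
  have hsqle : Real.sqrt α ≤ Real.exp (h/4) := by
    rw [hsq]; exact Real.exp_le_exp.mpr (by linarith)
  -- constants
  set τ : ℝ := h * Real.exp (-h/2) with hτ
  have hτpos : 0 < τ := mul_pos hh (Real.exp_pos _)
  have hexp4 : (0:ℝ) < Real.exp (-h/4) := Real.exp_pos _
  set c2 : ℝ := h * Real.exp (-h/4) * Real.sqrt α with hc2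
  have hc2pos : 0 < c2 := mul_pos (mul_pos hh hexp4) hsqpos
  have hc2le : c2 ≤ h := by
    have : Real.exp (-h/4) * Real.sqrt α ≤ Real.exp (-h/4) * Real.exp (h/4) :=
      mul_le_mul_of_nonneg_left hsqle hexp4.le
    rw [← Real.exp_add] at this
    have h1 : Real.exp (-h/4 + h/4) = 1 := by rw [show -h/4 + h/4 = 0 by ring, Real.exp_zero]
    rw [h1] at this
    calc c2 = h * (Real.exp (-h/4) * Real.sqrt α) := by ring
    _ ≤ h * 1 := mul_le_mul_of_nonneg_left this hh.le
    _ = h := by ring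
  obtain ⟨k, hk1, hk2⟩ := round_mem c2 s hc2pos
  set β : ℝ := s - c2 * k with hβ
  set c3 : ℝ := Real.sqrt α * τ with hc3
  have hc3pos : 0 < c3 := mul_pos hsqpos hτpos
  have hc3le : c3 ≤ h := by
    have : Real.sqrt α * Real.exp (-h/2) ≤ Real.exp (h/4) * Real.exp (-h/2) :=
      mul_le_mul_of_nonneg_right hsqle (Real.exp_pos _).le
    rw [← Real.exp_add] at this
    have h1 : Real.exp (h/4 + -h/2) ≤ 1 := Real.exp_le_one_iff.mpr (by linarith)
    calc c3 = Real.sqrt α * Real.exp (-h/2) * h := by rw [hc3, hτ]; ring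
    _ ≤ 1 * h := mul_le_mul_of_nonneg_right (le_trans this h1) hh.le
    _ = h := by ring
  obtain ⟨m2, hm21, hm22⟩ := round_mem c3 t2 hc3pos
  set γ2 : ℝ := t2 - c3 * m2 with hγ2
  set c1 : ℝ := α * τ with hc1
  have hc1pos : 0 < c1 := mul_pos hαpos hτpos
  have hc1le : c1 ≤ h := by
    have h1 : Real.exp (h/2) * Real.exp (-h/2) = 1 := by
      rw [← Real.exp_add, show h/2 + -h/2 = 0 by ring, Real.exp_zero]
    have : α * Real.exp (-h/2) ≤ Real.exp (h/2) * Real.exp (-h/2) :=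
      mul_le_mul_of_nonneg_right hαlt.le (Real.exp_pos _).le
    rw [h1] at this
    calc c1 = α * Real.exp (-h/2) * h := by rw [hc1, hτ]; ring
    _ ≤ 1 * h := mul_le_mul_of_nonneg_right this hh.le
    _ = h := by ring
  obtain ⟨m1, hm11, hm12⟩ := round_mem c1 (t1 - β * (c3 * m2)) hc1pos
  set γ1 : ℝ := (t1 - β * (c3 * m2)) - c1 * m1 with hγ1
  refine ⟨j, k, (m1, m2), (α, β, γ1, γ2), ⟨?_, ?_, ?_, ?_⟩, ?_⟩
  · exact ⟨by simpa [neg_div] using hαge, hαlt⟩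
  · exact ⟨by linarith, by linarith⟩
  · exact ⟨by linarith, by linarith⟩
  · exact ⟨by linarith, by linarith⟩
  · show smul _ _ = _
    simp only [smul, Ss, Aa]
    refine Prod.ext ?_ (Prod.ext ?_ (Prod.ext ?_ ?_))
    · show α * Real.exp (j*h) = a
      rw [hα, ← Real.exp_add, show Real.log a - h*j + j*h = Real.log a by ring,
        Real.exp_log hg]
    · show β + (h * Real.exp (-h/4) * k) * Real.sqrt α = s
      rw [hβ, hc2]; ring
    · show γ1 + (α * (τ * m1) + β * (Real.sqrt α * (τ * m2))) = t1
      rw [hγ1, hc1, hc3]; ring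
    · show γ2 + Real.sqrt α * (τ * m2) = t2
      rw [hγ2, hc3]; ring


end
end

section
/- Let Λ ⊂ S be discrete with weights w : Λ → ℝ⁺. If there exists h > 0 such that R := sup_{(x,y,z)∈S} Σ_{λ ∈ Λ ∩ Q_h(x,y,z)} w(λ) < ∞, then the upper weighted shearlet density D⁺(Λ,w) = limsup_{H→∞} sup_{(x,y,z)∈S} (Σ_{λ ∈ Λ ∩ Q_H(x,y,z)} w(λ))/H⁴ is finite; in fact D⁺(Λ,w) ≤ R e^{9h/4}/h⁴. -/
open MeasureTheory Real Filter Set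
open scoped ENNReal
noncomputable section

/-- Weighted number of points of `Λ` in `K`: `#_w(Λ ∩ K)`. -/
def wNum (Λ : Set SG) (w : SG → ℝ) (K : Set SG) : ℝ≥0∞ :=
  ∑' p : ↥(Λ ∩ K), ENNReal.ofReal (w p)

/-- Upper weighted shearlet density `D⁺(Λ, w)`. -/
def upperDensity (Λ : Set SG) (w : SG → ℝ) : ℝ≥0∞ :=
  Filter.limsup (fun h : ℝ =>
    ⨆ (g : SG) (_ : 0 < g.1), wNum Λ w (boxAt h g) / ENNReal.ofReal (h ^ 4)) Filter.atTop

/-- Lower weighted shearlet density `D⁻(Λ, w)`. -/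
def lowerDensity (Λ : Set SG) (w : SG → ℝ) : ℝ≥0∞ :=
  Filter.liminf (fun h : ℝ =>
    ⨅ (g : SG) (_ : 0 < g.1), wNum Λ w (boxAt h g) / ENNReal.ofReal (h ^ 4)) Filter.atTop

/-!
The box `Q_H` is covered by about `e^{2h} (1 + h/4) (H/h)⁴` left translates `γ · Q_h`, the
points `γ` forming a grid adapted to the group law; by associativity `g · Q_H` is then covered
by the translates `(g γ) · Q_h`, each of weight at most `R`. Since `1 + h/4 < e^{h/4}`, the
number of translates is at most `e^{9h/4} (H/h)⁴` once `H` is large.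
-/

open Topology

/-- For `V < 0` this is `{0}`, not `∅`. -/
def intBall (V : ℝ) : Finset ℤ := Finset.Icc (-(⌊V⌋₊ : ℤ)) ⌊V⌋₊

lemma mem_intBall_of_abs_le {V : ℝ} {j : ℤ} (hj : |(j : ℝ)| ≤ V) : j ∈ intBall V := by
  have hV : 0 ≤ V := (abs_nonneg _).trans hj
  have : j.natAbs ≤ ⌊V⌋₊ := Nat.le_floor (by rwa [Nat.cast_natAbs, Int.cast_abs])
  rw [intBall, Finset.mem_Icc]
  omega

lemma card_intBall_le {V : ℝ} (hV : 0 ≤ V) : ((intBall V).card : ℝ) ≤ 2 * V + 1 := by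
  have hcard : (intBall V).card = 2 * ⌊V⌋₊ + 1 := by rw [intBall, Int.card_Icc]; omega
  rw [hcard]
  push_cast
  linarith [Nat.floor_le hV]

lemma sum_abs_Icc_neg (N : ℕ) :
    ∑ m ∈ Finset.Icc (-(N : ℤ)) N, |(m : ℝ)| = N * (N + 1) := by
  induction N with
  | zero => simp
  | succ N ih =>
    have hIcc : Finset.Icc (-((N + 1 : ℕ) : ℤ)) ((N + 1 : ℕ) : ℤ) =
        insert (-((N + 1 : ℕ) : ℤ)) (insert ((N + 1 : ℕ) : ℤ) (Finset.Icc (-(N : ℤ)) N)) := by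
      ext x
      simp only [Finset.mem_Icc, Finset.mem_insert]
      omega
    rw [hIcc, Finset.sum_insert (by simp; omega), Finset.sum_insert (by simp), ih]
    push_cast
    rw [abs_of_nonpos (by linarith), abs_of_nonneg (by linarith)]
    ring

lemma sum_abs_intBall_le {V : ℝ} (hV : 0 ≤ V) :
    ∑ m ∈ intBall V, |(m : ℝ)| ≤ V * (V + 1) := by
  rw [intBall, sum_abs_Icc_neg]
  have := Nat.floor_le hV
  gcongr

lemma sum_card_intBall_le {A c V : ℝ} (hA : 0 ≤ A) (hc : 0 ≤ c) (hV : 0 ≤ V) :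
    ∑ m ∈ intBall V, ((intBall (A + c * |(m : ℝ)|)).card : ℝ) ≤
      (2 * V + 1) * (2 * A + 1) + 2 * c * (V * (V + 1)) :=
  calc ∑ m ∈ intBall V, ((intBall (A + c * |(m : ℝ)|)).card : ℝ)
      ≤ ∑ m ∈ intBall V, ((2 * A + 1) + 2 * c * |(m : ℝ)|) :=
        Finset.sum_le_sum fun m _ => (card_intBall_le (by positivity)).trans_eq (by ring)
    _ = (intBall V).card * (2 * A + 1) + 2 * c * ∑ m ∈ intBall V, |(m : ℝ)| := by
        rw [Finset.sum_add_distrib, Finset.sum_const, nsmul_eq_mul, Finset.mul_sum]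
    _ ≤ (2 * V + 1) * (2 * A + 1) + 2 * c * (V * (V + 1)) := by
        gcongr
        · exact card_intBall_le hV
        · exact sum_abs_intBall_le hV

lemma exists_int_sub_mul_mem_Ico {h D : ℝ} (hD : 0 < D) (hDh : D ≤ h) (x : ℝ) :
    ∃ j : ℤ, x - j * D ∈ Ico (-h / 2) (h / 2) ∧ |(j : ℝ)| * D ≤ |x| + h / 2 := by
  set j := ⌊(x + h / 2) / D⌋
  have hlo : (j : ℝ) * D ≤ x + h / 2 := (le_div_iff₀ hD).mp (Int.floor_le _)
  have hhi : x + h / 2 < (j + 1) * D := (div_lt_iff₀ hD).mp (Int.lt_floor_add_one _)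
  refine ⟨j, ⟨by linarith, by linarith⟩, ?_⟩
  rcases abs_cases (j : ℝ) with ⟨hj, -⟩ | ⟨hj, -⟩ <;> rw [hj] <;>
    linarith [le_abs_self x, neg_abs_le x]

lemma abs_le_div_of_abs_mul_le {x d B E h : ℝ} (hx : |x| * d ≤ B) (hdE : h ≤ d * E)
    (hE : 0 ≤ E) (hh : 0 < h) : |x| ≤ B * E / h := by
  rw [le_div_iff₀ hh]
  calc |x| * h ≤ |x| * d * E := by
        rw [mul_assoc]; exact mul_le_mul_of_nonneg_left hdE (abs_nonneg x)
    _ ≤ B * E := mul_le_mul_of_nonneg_right hx hE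

lemma eventually_mul_add_pow_le {a b : ℝ} (hab : a < b) (r : ℝ) (n : ℕ) :
    ∀ᶠ H in atTop, a * (H + r) ^ n ≤ b * H ^ n := by
  have hlim : Tendsto (fun H : ℝ => a * (1 + r / H) ^ n) atTop (𝓝 (a * (1 + 0) ^ n)) :=
    ((tendsto_const_nhds.add (tendsto_const_nhds.div_atTop tendsto_id)).pow n).const_mul a
  rw [add_zero, one_pow, mul_one] at hlim
  filter_upwards [eventually_gt_atTop 0, hlim.eventually (gt_mem_nhds hab)] with H hH hlt
  have : (H + r) ^ n = (1 + r / H) ^ n * H ^ n := by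
    rw [← mul_pow]; congr 1; field_simp
  rw [this, ← mul_assoc]
  exact mul_le_mul_of_nonneg_right hlt.le (by positivity)

lemma smul_smul_of_nonneg (g γ q : SG) (hq : 0 ≤ q.1) :
    smul g (smul γ q) = smul (smul g γ) q := by
  obtain ⟨g₁, g₂, g₃, g₄⟩ := g
  obtain ⟨c₁, c₂, c₃, c₄⟩ := γ
  obtain ⟨q₁, q₂, q₃, q₄⟩ := q
  obtain ⟨r, hr, rfl⟩ : ∃ r, 0 ≤ r ∧ q₁ = r ^ 2 := ⟨√q₁, sqrt_nonneg _, (sq_sqrt hq).symm⟩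
  simp only [smul, Ss, Aa, Prod.mk.injEq, Prod.mk_add_mk]
  rw [sqrt_mul (by positivity) c₁, sqrt_sq hr]
  exact ⟨by ring, by ring, by ring, by ring⟩

lemma boxAt_smul (h : ℝ) (g γ : SG) :
    boxAt h (smul g γ) = smul g '' boxAt h γ := by
  rw [boxAt, boxAt, ← image_comp]
  refine image_congr fun q hq => (smul_smul_of_nonneg g γ q ?_).symm
  exact (exp_pos _).le.trans hq.1.1

lemma wNum_mono (Λ : Set SG) (w : SG → ℝ) {K K' : Set SG} (hK : K ⊆ K') :
    wNum Λ w K ≤ wNum Λ w K' :=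
  ENNReal.tsum_mono_subtype (fun p => ENNReal.ofReal (w p)) (inter_subset_inter_right _ hK)

lemma wNum_biUnion_le (Λ : Set SG) (w : SG → ℝ) {ι : Type*} (I : Finset ι) (K : ι → Set SG) :
    wNum Λ w (⋃ i ∈ I, K i) ≤ ∑ i ∈ I, wNum Λ w (K i) := by
  unfold wNum
  rw [inter_iUnion₂]
  exact ENNReal.tsum_biUnion_le (fun p => ENNReal.ofReal (w p)) I _

lemma wNum_boxAt_le_card_mul (Λ : Set SG) (w : SG → ℝ) {h H R : ℝ}
    (hbound : ∀ g : SG, 0 < g.1 → wNum Λ w (boxAt h g) ≤ ENNReal.ofReal R)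
    {ι : Type*} (I : Finset ι) (γ : ι → SG) (hγ : ∀ i, 0 < (γ i).1)
    (hcover : Qbox H ⊆ ⋃ i ∈ I, boxAt h (γ i)) (g : SG) (hg : 0 < g.1) :
    wNum Λ w (boxAt H g) ≤ I.card * ENNReal.ofReal R := by
  have hsub : boxAt H g ⊆ ⋃ i ∈ I, boxAt h (smul g (γ i)) := by
    rintro _ ⟨q, hq, rfl⟩
    obtain ⟨i, hi, hqi⟩ := mem_iUnion₂.mp (hcover hq)
    exact mem_iUnion₂.mpr ⟨i, hi, boxAt_smul h g (γ i) ▸ mem_image_of_mem _ hqi⟩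
  calc wNum Λ w (boxAt H g)
      ≤ ∑ i ∈ I, wNum Λ w (boxAt h (smul g (γ i))) :=
        (wNum_mono Λ w hsub).trans (wNum_biUnion_le Λ w I _)
    _ ≤ ∑ _i ∈ I, ENNReal.ofReal R :=
        Finset.sum_le_sum fun i _ => hbound _ (mul_pos (hγ i) hg)
    _ = I.card * ENNReal.ofReal R := by rw [Finset.sum_const, nsmul_eq_mul]

/-- Right multiplication by `(e^u, s, t) ∈ Q_h` turns the steps `h e^{-h/4}` and `h e^{-h/2}`
into `h e^{u/2 - h/4}` and `h e^{u - h/2}`, both at most `h`, so the translates of `Q_h` leave no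
gaps. The index `m` of the `t₂`-step precedes the index `n` of the `t₁`-step because the shear
makes the range of `n` grow with `|m|`. -/
def coverPoint (h : ℝ) (i : ℤ × ℤ × Σ _ : ℤ, ℤ) : SG :=
  (exp (i.1 * h), i.2.1 * (h * exp (-h / 4)),
    i.2.2.2 * (h * exp (-h / 2)), i.2.2.1 * (h * exp (-h / 4)))

def coverIndex (h H : ℝ) : Finset (ℤ × ℤ × Σ _ : ℤ, ℤ) :=
  intBall ((H + h) / (2 * h)) ×ˢ intBall ((H + h) * exp (h / 2) / (2 * h)) ×ˢ
    (intBall ((H + h) * exp (h / 2) / (2 * h))).sigma fun m =>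
      intBall ((H + h) * exp h / (2 * h) + h * exp (h / 2) / 2 * |(m : ℝ)|)

lemma smul_coverPoint (h u s t₁ t₂ : ℝ) (k j m n : ℤ) :
    smul (coverPoint h (k, j, ⟨m, n⟩)) (exp u, s, t₁, t₂) =
      (exp (u + k * h), s + j * (h * exp (u / 2 - h / 4)),
        t₁ + n * (h * exp (u - h / 2)) + s * (m * (h * exp (u / 2 - h / 4))),
        t₂ + m * (h * exp (u / 2 - h / 4))) := by
  simp only [smul, coverPoint, Ss, Aa, ← exp_half, Prod.mk_add_mk, Prod.mk.injEq]
  simp only [exp_add, exp_sub, neg_div, exp_neg]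
  exact ⟨trivial, by ring, by ring, by ring⟩

lemma mem_coverIndex {h H d e : ℝ} (hh : 0 < h) (he : 0 < e) (hdE : h ≤ d * exp (h / 2))
    (heE : h ≤ e * exp h) (hde : d ≤ e * exp (h / 2)) {k j m n : ℤ}
    (hk : |(k : ℝ)| * h ≤ (H + h) / 2) (hj : |(j : ℝ)| * d ≤ (H + h) / 2)
    (hm : |(m : ℝ)| * d ≤ (H + h) / 2)
    (hn : |(n : ℝ)| * e ≤ (H + h) / 2 + h / 2 * (|(m : ℝ)| * d)) :
    (k, j, ⟨m, n⟩) ∈ coverIndex h H := by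
  have hH : 0 ≤ H + h := by linarith [mul_nonneg (abs_nonneg (k : ℝ)) hh.le]
  simp only [coverIndex, Finset.mem_product, Finset.mem_sigma]
  refine ⟨mem_intBall_of_abs_le ?_, mem_intBall_of_abs_le ?_, mem_intBall_of_abs_le ?_,
    mem_intBall_of_abs_le ?_⟩
  · rw [le_div_iff₀ (by positivity)]; linarith
  · exact (abs_le_div_of_abs_mul_le hj hdE (exp_pos _).le hh).trans_eq (by ring)
  · exact (abs_le_div_of_abs_mul_le hm hdE (exp_pos _).le hh).trans_eq (by ring)
  · refine le_of_mul_le_mul_right (hn.trans ?_) he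
    have h₁ : (H + h) / 2 ≤ (H + h) * exp h / (2 * h) * e := by
      rw [div_mul_eq_mul_div, le_div_iff₀ (by positivity)]; nlinarith
    have h₂ := mul_le_mul_of_nonneg_left hde (by positivity : 0 ≤ h / 2 * |(m : ℝ)|)
    linarith

lemma Qbox_subset_iUnion_coverPoint {h : ℝ} (hh : 0 < h) (H : ℝ) :
    Qbox H ⊆ ⋃ i ∈ coverIndex h H, boxAt h (coverPoint h i) := by
  rintro ⟨α, σ, τ₁, τ₂⟩ hp
  simp only [Qbox, mem_prod, mem_Ico] at hp
  obtain ⟨⟨hα₁, hα₂⟩, ⟨hσ₁, hσ₂⟩, ⟨hτ₁₁, hτ₁₂⟩, hτ₂₁, hτ₂₂⟩ := hp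
  have hα : 0 < α := (exp_pos _).trans_le hα₁
  have hlogα : |log α| ≤ H / 2 :=
    abs_le.mpr ⟨by rw [← neg_div]; exact (le_log_iff_exp_le hα).2 hα₁,
      ((log_lt_iff_lt_exp hα).2 hα₂).le⟩
  have hσ : |σ| ≤ H / 2 := abs_le.mpr ⟨by linarith, hσ₂.le⟩
  have hτ₁ : |τ₁| ≤ H / 2 := abs_le.mpr ⟨by linarith, hτ₁₂.le⟩
  have hτ₂ : |τ₂| ≤ H / 2 := abs_le.mpr ⟨by linarith, hτ₂₂.le⟩
  obtain ⟨k, ⟨hu₁, hu₂⟩, hk⟩ := exists_int_sub_mul_mem_Ico hh le_rfl (log α)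
  set u := log α - k * h with hu
  set d := h * exp (u / 2 - h / 4)
  set e := h * exp (u - h / 2)
  have hd : 0 < d := by positivity
  have hdh : d ≤ h := mul_le_of_le_one_right hh.le (exp_le_one_iff.mpr (by linarith))
  have heh : e ≤ h := mul_le_of_le_one_right hh.le (exp_le_one_iff.mpr (by linarith))
  obtain ⟨j, ⟨hs₁, hs₂⟩, hj⟩ := exists_int_sub_mul_mem_Ico hd hdh σ
  obtain ⟨m, ⟨ht₂₁, ht₂₂⟩, hm⟩ := exists_int_sub_mul_mem_Ico hd hdh τ₂
  set s := σ - j * d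
  obtain ⟨n, ⟨ht₁₁, ht₁₂⟩, hn⟩ := exists_int_sub_mul_mem_Ico (by positivity) heh (τ₁ - s * (m * d))
  have hc : |τ₁ - s * (m * d)| ≤ H / 2 + h / 2 * (|(m : ℝ)| * d) :=
    calc |τ₁ - s * (m * d)| ≤ |τ₁| + |s * (m * d)| := abs_sub _ _
      _ = |τ₁| + |s| * (|(m : ℝ)| * d) := by rw [abs_mul, abs_mul, abs_of_pos hd]
      _ ≤ H / 2 + h / 2 * (|(m : ℝ)| * d) := by
          gcongr; exact abs_le.mpr ⟨by linarith, hs₂.le⟩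
  refine mem_iUnion₂.mpr ⟨(k, j, ⟨m, n⟩), ?_, (exp u, s, τ₁ - s * (m * d) - n * e, τ₂ - m * d),
    ⟨⟨exp_le_exp.mpr hu₁, exp_lt_exp.mpr hu₂⟩, ⟨hs₁, hs₂⟩, ⟨ht₁₁, ht₁₂⟩, ht₂₁, ht₂₂⟩, ?_⟩
  · refine mem_coverIndex (d := d) (e := e) hh (by positivity) ?_ ?_ ?_
      (by linarith) (by linarith) (by linarith) (by linarith)
    all_goals rw [mul_assoc, ← exp_add]
    · exact le_mul_of_one_le_right hh.le (one_le_exp (by linarith))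
    · exact le_mul_of_one_le_right hh.le (one_le_exp (by linarith))
    · exact mul_le_mul_of_nonneg_left (exp_le_exp.mpr (by linarith)) hh.le
  · show smul _ _ = _
    rw [smul_coverPoint, show u + k * h = log α by rw [hu]; ring, exp_log hα]
    simp only [Prod.mk.injEq]
    exact ⟨trivial, by ring, by ring, by ring⟩

lemma card_coverIndex_le {h H : ℝ} (hh : 0 < h) (hH : 0 ≤ H) :
    ((coverIndex h H).card : ℝ) ≤ exp (2 * h) * (1 + h / 4) * ((H + 3 * h) / h) ^ 4 := by
  have hE : 1 ≤ exp (h / 2) := one_le_exp (by positivity)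
  have hE₂ : exp h = exp (h / 2) ^ 2 := by rw [← exp_nat_mul]; congr 1; push_cast; ring
  have hE₄ : exp (2 * h) = exp (h / 2) ^ 4 := by rw [← exp_nat_mul]; congr 1; push_cast; ring
  have hK := card_intBall_le (V := (H + h) / (2 * h)) (by positivity)
  have hJ := card_intBall_le (V := (H + h) * exp (h / 2) / (2 * h)) (by positivity)
  have hN := sum_card_intBall_le (A := (H + h) * exp h / (2 * h)) (c := h * exp (h / 2) / 2)
    (V := (H + h) * exp (h / 2) / (2 * h)) (by positivity) (by positivity) (by positivity)
  rw [coverIndex, Finset.card_product, Finset.card_product, Finset.card_sigma]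
  push_cast
  refine (mul_le_mul hK (mul_le_mul hJ hN (by positivity) (by positivity)) (by positivity)
    (by positivity)).trans ?_
  rw [hE₂, hE₄]
  generalize exp (h / 2) = E at hE
  set P := H + 3 * h
  have hK' : 2 * ((H + h) / (2 * h)) + 1 ≤ P / h := by
    rw [le_div_iff₀ hh]; field_simp; linarith
  have hJ' : 2 * ((H + h) * E / (2 * h)) + 1 ≤ P * E / h := by
    rw [le_div_iff₀ hh]; field_simp; nlinarith
  have hA' : 2 * ((H + h) * E ^ 2 / (2 * h)) + 1 ≤ P * E ^ 2 / h := by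
    rw [le_div_iff₀ hh]; field_simp; nlinarith [one_le_pow₀ (n := 2) hE]
  have hV₁ : (H + h) * E / (2 * h) ≤ P * E / (2 * h) := by gcongr; linarith
  have hV₂ : (H + h) * E / (2 * h) + 1 ≤ P * E / (2 * h) := by
    rw [le_div_iff₀ (by positivity)]; field_simp; nlinarith
  calc _ ≤ P / h * (P * E / h * (P * E / h * (P * E ^ 2 / h) +
        2 * (h * E / 2) * (P * E / (2 * h) * (P * E / (2 * h))))) := by
        gcongr
    _ = E ^ 4 * (1 + h / 4) * (P / h) ^ 4 := by field_simp; ring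

lemma eventually_card_coverIndex_le {h : ℝ} (hh : 0 < h) :
    ∀ᶠ H in atTop, ((coverIndex h H).card : ℝ) ≤ exp (9 * h / 4) * (H / h) ^ 4 := by
  have hlt : 1 + h / 4 < exp (h / 4) := by linarith [add_one_lt_exp (x := h / 4) (by positivity)]
  filter_upwards [eventually_ge_atTop 0, eventually_mul_add_pow_le hlt (3 * h) 4]
    with H hH hlarge
  calc ((coverIndex h H).card : ℝ) ≤ exp (2 * h) * (1 + h / 4) * ((H + 3 * h) / h) ^ 4 :=
        card_coverIndex_le hh hH
    _ = exp (2 * h) / h ^ 4 * ((1 + h / 4) * (H + 3 * h) ^ 4) := by ring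
    _ ≤ exp (2 * h) / h ^ 4 * (exp (h / 4) * H ^ 4) := by gcongr
    _ = exp (9 * h / 4) * (H / h) ^ 4 := by
        rw [show 9 * h / 4 = 2 * h + h / 4 by ring, exp_add]; ring

theorem upperDensity_le_of_bounded_count_general (Λ : Set SG) (w : SG → ℝ)
    (h R : ℝ) (hh : 0 < h) (hR : 0 ≤ R)
    (hbound : ∀ g : SG, 0 < g.1 → wNum Λ w (boxAt h g) ≤ ENNReal.ofReal R) :
    upperDensity Λ w ≠ ⊤ ∧
    upperDensity Λ w ≤ ENNReal.ofReal (R * Real.exp (9 * h / 4) / h ^ 4) := by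
  have hle : upperDensity Λ w ≤ ENNReal.ofReal (R * exp (9 * h / 4) / h ^ 4) := by
    refine limsup_le_of_le (by isBoundedDefault) ?_
    filter_upwards [eventually_card_coverIndex_le hh] with H hcard
    refine iSup₂_le fun g hg => ENNReal.div_le_of_le_mul ?_
    calc wNum Λ w (boxAt H g) ≤ (coverIndex h H).card * ENNReal.ofReal R :=
          wNum_boxAt_le_card_mul Λ w hbound _ _ (fun _ => exp_pos _)
            (Qbox_subset_iUnion_coverPoint hh H) g hg
      _ = ENNReal.ofReal ((coverIndex h H).card * R) := by
          rw [ENNReal.ofReal_mul (Nat.cast_nonneg _), ENNReal.ofReal_natCast]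
      _ ≤ ENNReal.ofReal (R * exp (9 * h / 4) / h ^ 4 * H ^ 4) := by
          refine ENNReal.ofReal_le_ofReal ((mul_le_mul_of_nonneg_right hcard hR).trans_eq ?_)
          field_simp
      _ = ENNReal.ofReal (R * exp (9 * h / 4) / h ^ 4) * ENNReal.ofReal (H ^ 4) :=
          ENNReal.ofReal_mul (by positivity)
  exact ⟨ne_top_of_le_ne_top ENNReal.ofReal_ne_top hle, hle⟩

/-- If for some `h > 0` the weighted counts `#_w(Λ ∩ Q_h(x,y,z))` are uniformly bounded by `R`,
then the upper weighted shearlet density is finite; in fact `D⁺(Λ,w) ≤ R e^{9h/4}/h⁴`. -/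
theorem upperDensity_le_of_bounded_count (Λ : Set SG) (w : SG → ℝ)
    (hΛ : ∀ p ∈ Λ, 0 < p.1) (hw : ∀ p ∈ Λ, 0 < w p)
    (h R : ℝ) (hh : 0 < h) (hR : 0 ≤ R)
    (hbound : ∀ g : SG, 0 < g.1 → wNum Λ w (boxAt h g) ≤ ENNReal.ofReal R) :
    upperDensity Λ w ≠ ⊤ ∧
    upperDensity Λ w ≤ ENNReal.ofReal (R * Real.exp (9 * h / 4) / h ^ 4) :=
  upperDensity_le_of_bounded_count_general Λ w h R hh hR hbound

end
end

section
/- Let a > 1 and b, c > 0, and let Λ = {(a^j, bk, cm) : j,k ∈ ℤ, m ∈ ℤ²} ⊂ S with weight w ≡ 1. Then Λ has uniform shearlet density D⁺(Λ,w) = D⁻(Λ,w) = 1/(b c² ln a). -/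
open MeasureTheory Real Filter Set
open scoped ENNReal
noncomputable section

/-!
Left-dividing by `g`, a lattice point `(a^j, b k, c m)` lies in `Q_h(g)` iff `j log a` lies in a
window of length `h` around `log g₁` and then `b k`, `c m₁`, `c m₂` lie in windows of length `h`
whose centres depend only on `g` and the previous indices (the group law is triangular). A window
of length `h` meets `d ℤ` in between `h/d - 1` and `h/d + 1` points, so the count is squeezed
between `(h/log a ∓ 1)(h/b ∓ 1)(h/c ∓ 1)²` uniformly in `g`, and both bounds divided by `h⁴` tend
to `1/(b c² log a)`.
-/

open scoped Finset Topology

section IntegerWindows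

lemma sub_sub_one_le_card_Ico_ceil (x y : ℝ) : y - x - 1 ≤ #(Finset.Ico ⌈x⌉ ⌈y⌉) := by
  rw [Int.card_Ico]
  have hz : ((⌈y⌉ - ⌈x⌉ : ℤ) : ℝ) ≤ ((⌈y⌉ - ⌈x⌉).toNat : ℤ) := mod_cast Int.self_le_toNat _
  push_cast at hz ⊢
  linarith [Int.le_ceil y, Int.ceil_lt_add_one x]

lemma card_Ico_ceil_le {x y : ℝ} (hxy : x ≤ y) : #(Finset.Ico ⌈x⌉ ⌈y⌉) ≤ y - x + 1 := by
  rw [Int.card_Ico, ← Int.cast_natCast, Int.toNat_of_nonneg (sub_nonneg.2 (Int.ceil_mono hxy))]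
  push_cast
  linarith [Int.ceil_lt_add_one y, Int.le_ceil x]

def window (d μ h : ℝ) : Finset ℤ := Finset.Ico ⌈(μ - h / 2) / d⌉ ⌈(μ + h / 2) / d⌉

variable {d : ℝ} (μ h : ℝ)

lemma mem_window (hd : 0 < d) (k : ℤ) :
    k ∈ window d μ h ↔ d * k - μ ∈ Ico (-h / 2) (h / 2) := by
  rw [window, Finset.mem_Ico, Int.ceil_le, Int.lt_ceil, div_le_iff₀ hd, lt_div_iff₀ hd, mem_Ico]
  constructor <;> rintro ⟨h1, h2⟩ <;> constructor <;> linarith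

lemma sub_one_le_card_window (hd : 0 < d) : h / d - 1 ≤ #(window d μ h) := by
  refine le_trans (le_of_eq ?_) (sub_sub_one_le_card_Ico_ceil _ _)
  field_simp
  ring

lemma card_window_le (hd : 0 < d) (hh : 0 ≤ h) : #(window d μ h) ≤ h / d + 1 := by
  refine le_trans (card_Ico_ceil_le (by gcongr; linarith)) (le_of_eq ?_)
  field_simp
  ring

end IntegerWindows

section DependentProduct

variable {α β : Type*}

def Finset.dprod (s : Finset α) (t : α → Finset β) : Finset (α × β) :=
  (s.sigma t).map (Equiv.sigmaEquivProd α β).toEmbedding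

variable {s : Finset α} {t : α → Finset β}

@[simp]
lemma Finset.mem_dprod {x : α × β} : x ∈ s.dprod t ↔ x.1 ∈ s ∧ x.2 ∈ t x.1 := by
  simp [Finset.dprod, Finset.mem_map_equiv]

lemma Finset.card_dprod : #(s.dprod t) = ∑ a ∈ s, #(t a) := by
  rw [Finset.dprod, Finset.card_map, Finset.card_sigma]

lemma Finset.mul_le_card_dprod {n : ℝ} (h : ∀ a ∈ s, n ≤ #(t a)) : #s * n ≤ #(s.dprod t) := by
  rw [Finset.card_dprod, Nat.cast_sum]
  simpa using Finset.card_nsmul_le_sum s _ n h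

lemma Finset.card_dprod_le_mul {n : ℝ} (h : ∀ a ∈ s, #(t a) ≤ n) : #(s.dprod t) ≤ #s * n := by
  rw [Finset.card_dprod, Nat.cast_sum]
  simpa using Finset.sum_le_card_nsmul s _ n h

end DependentProduct

lemma wNum_range_one_eq_card {ι : Type*} {φ : ι → SG} (hφ : φ.Injective) {K : Set SG}
    {I : Finset ι} (hI : ∀ n, φ n ∈ K ↔ n ∈ I) : wNum (range φ) (fun _ => 1) K = #I := by
  have hset : range φ ∩ K = φ '' I := by
    rw [← image_preimage_eq_range_inter]
    congr 1
    ext n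
    exact hI n
  simp only [wNum, ENNReal.ofReal_one, hset, ENNReal.tsum_set_one, hφ.encard_image,
    Set.encard_coe_eq_coe_finsetCard]
  rfl

def ldiv (g p : SG) : SG :=
  (p.1 / g.1, p.2.1 - g.2.1 * √(p.1 / g.1),
    p.2.2.1 - (p.1 / g.1 * g.2.2.1 + (p.2.1 - g.2.1 * √(p.1 / g.1)) * (√(p.1 / g.1) * g.2.2.2)),
    p.2.2.2 - √(p.1 / g.1) * g.2.2.2)

lemma smul_eq_iff_eq_ldiv {g q p : SG} (hg : g.1 ≠ 0) : smul g q = p ↔ q = ldiv g p := by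
  constructor
  · rintro rfl
    have hu : q.1 * g.1 / g.1 = q.1 := mul_div_cancel_right₀ _ hg
    simp only [ldiv, smul, Ss, Aa, hu]
    ext <;> simp only [Prod.fst_add, Prod.snd_add] <;> ring
  · rintro rfl
    simp only [ldiv, smul, Ss, Aa, div_mul_cancel₀ _ hg]
    ext <;> simp only [Prod.fst_add, Prod.snd_add] <;> ring

lemma mem_boxAt_iff {g p : SG} (hg : g.1 ≠ 0) (h : ℝ) : p ∈ boxAt h g ↔ ldiv g p ∈ Qbox h := by
  simp only [boxAt, mem_image, smul_eq_iff_eq_ldiv hg, exists_eq_right]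

lemma mem_Ico_exp_iff {u : ℝ} (hu : 0 < u) (x y : ℝ) :
    u ∈ Ico (exp x) (exp y) ↔ log u ∈ Ico x y := by
  rw [mem_Ico, mem_Ico, le_log_iff_exp_le hu, log_lt_iff_lt_exp hu]

section Lattice

variable {a b c : ℝ}

def latticePt (a b c : ℝ) (n : ℤ × ℤ × ℤ × ℤ) : SG :=
  (a ^ n.1, b * n.2.1, c * n.2.2.1, c * n.2.2.2)

lemma range_latticePt : range (latticePt a b c) =
    {p : SG | ∃ (j k : ℤ) (m : ℤ × ℤ), p = ((a ^ j : ℝ), b * k, c * m.1, c * m.2)} := by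
  ext p
  simp [latticePt, eq_comm]

lemma latticePt_injective (ha : 1 < a) (hb : 0 < b) (hc : 0 < c) :
    (latticePt a b c).Injective := by
  rintro ⟨j, k, m₁, m₂⟩ ⟨j', k', m₁', m₂'⟩ h
  simp only [latticePt, Prod.mk.injEq, mul_right_inj' hb.ne', mul_right_inj' hc.ne',
    Int.cast_inj] at h
  obtain ⟨hj, hk, hm₁, hm₂⟩ := h
  rw [zpow_right_injective₀ (by linarith) ha.ne' hj, hk, hm₁, hm₂]

def boxIndices (a b c h : ℝ) (g : SG) : Finset (ℤ × ℤ × ℤ × ℤ) :=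
  (window (log a) (log g.1) h).dprod fun j =>
    (window b (g.2.1 * √(a ^ j / g.1)) h).dprod fun k =>
      window c (a ^ j / g.1 * g.2.2.1 +
        (b * k - g.2.1 * √(a ^ j / g.1)) * (√(a ^ j / g.1) * g.2.2.2)) h ×ˢ
      window c (√(a ^ j / g.1) * g.2.2.2) h

lemma latticePt_mem_boxAt_iff (ha : 1 < a) (hb : 0 < b) (hc : 0 < c) {g : SG} (hg : 0 < g.1)
    (h : ℝ) (n : ℤ × ℤ × ℤ × ℤ) : latticePt a b c n ∈ boxAt h g ↔ n ∈ boxIndices a b c h g := by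
  obtain ⟨j, k, m₁, m₂⟩ := n
  have haj : 0 < a ^ j := zpow_pos (by linarith) j
  have hu : 0 < a ^ j / g.1 := div_pos haj hg
  have hlog : log (a ^ j / g.1) = log a * j - log g.1 := by
    rw [log_div haj.ne' hg.ne', log_zpow, mul_comm]
  simp only [boxIndices, Finset.mem_dprod, Finset.mem_product, mem_window _ _ (log_pos ha),
    mem_window _ _ hb, mem_window _ _ hc, mem_boxAt_iff hg.ne', Qbox, ldiv, latticePt, mem_prod,
    mem_Ico_exp_iff hu, hlog]

lemma wNum_range_latticePt_boxAt (ha : 1 < a) (hb : 0 < b) (hc : 0 < c) {g : SG} (hg : 0 < g.1)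
    (h : ℝ) :
    wNum (range (latticePt a b c)) (fun _ => 1) (boxAt h g) = #(boxIndices a b c h g) :=
  wNum_range_one_eq_card (latticePt_injective ha hb hc) (latticePt_mem_boxAt_iff ha hb hc hg h)

lemma card_boxIndices_le (ha : 1 < a) (hb : 0 < b) (hc : 0 < c) (g : SG) {h : ℝ} (hh : 0 ≤ h) :
    #(boxIndices a b c h g) ≤ (h / log a + 1) * ((h / b + 1) * ((h / c + 1) * (h / c + 1))) := by
  have hL := log_pos ha
  refine (Finset.card_dprod_le_mul (n := (h / b + 1) * ((h / c + 1) * (h / c + 1))) fun j _ =>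
    (Finset.card_dprod_le_mul (n := (h / c + 1) * (h / c + 1)) fun k _ => ?_).trans ?_).trans ?_
  · rw [Finset.card_product, Nat.cast_mul]
    exact mul_le_mul (card_window_le _ _ hc hh) (card_window_le _ _ hc hh) (by positivity)
      (by positivity)
  · exact mul_le_mul_of_nonneg_right (card_window_le _ _ hb hh) (by positivity)
  · exact mul_le_mul_of_nonneg_right (card_window_le _ _ hL hh) (by positivity)

lemma le_card_boxIndices (ha : 1 < a) (hb : 0 < b) (hc : 0 < c) (g : SG) {h : ℝ}
    (haL : log a ≤ h) (hbh : b ≤ h) (hch : c ≤ h) :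
    (h / log a - 1) * ((h / b - 1) * ((h / c - 1) * (h / c - 1))) ≤ #(boxIndices a b c h g) := by
  have hL := log_pos ha
  have nL : 0 ≤ h / log a - 1 := by rw [sub_nonneg, one_le_div hL]; exact haL
  have nb : 0 ≤ h / b - 1 := by rw [sub_nonneg, one_le_div hb]; exact hbh
  have nc : 0 ≤ h / c - 1 := by rw [sub_nonneg, one_le_div hc]; exact hch
  refine le_trans ?_ (Finset.mul_le_card_dprod (n := (h / b - 1) * ((h / c - 1) * (h / c - 1)))
    fun j _ => le_trans ?_
      (Finset.mul_le_card_dprod (n := (h / c - 1) * (h / c - 1)) fun k _ => ?_))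
  · exact mul_le_mul_of_nonneg_right (sub_one_le_card_window _ _ hL) (by positivity)
  · exact mul_le_mul_of_nonneg_right (sub_one_le_card_window _ _ hb) (by positivity)
  · rw [Finset.card_product, Nat.cast_mul]
    exact mul_le_mul (sub_one_le_card_window _ _ hc) (sub_one_le_card_window _ _ hc) nc
      (by positivity)

end Lattice

lemma tendsto_add_div_self {d : ℝ} (s : ℝ) :
    Tendsto (fun h : ℝ => (h / d + s) / h) atTop (𝓝 (1 / d)) := by
  have hlim : Tendsto (fun h : ℝ => 1 / d + s / h) atTop (𝓝 (1 / d + 0)) :=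
    tendsto_const_nhds.add (tendsto_const_nhds.div_atTop tendsto_id)
  rw [add_zero] at hlim
  refine hlim.congr' ?_
  filter_upwards [eventually_ne_atTop 0] with h hh
  field_simp

lemma tendsto_prod_add_div_pow_four {L b c : ℝ} (s : ℝ) :
    Tendsto (fun h : ℝ => (h / L + s) * ((h / b + s) * ((h / c + s) * (h / c + s))) / h ^ 4)
      atTop (𝓝 (1 / (b * c ^ 2 * L))) := by
  have hlim := (tendsto_add_div_self (d := L) s).mul ((tendsto_add_div_self (d := b) s).mul
    ((tendsto_add_div_self (d := c) s).mul (tendsto_add_div_self (d := c) s)))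
  convert hlim using 1
  · ext h
    ring
  · field_simp

lemma tendsto_iSup_iInf_of_uniform_squeeze {α β ι : Type*} [CompleteLinearOrder α]
    [TopologicalSpace α] [OrderTopology α] {l : Filter β} {p : ι → Prop} {F : β → ι → α}
    {lo hi : β → α} {D : α} (hp : ∃ i, p i) (hlo : Tendsto lo l (𝓝 D)) (hhi : Tendsto hi l (𝓝 D))
    (hF : ∀ᶠ x in l, ∀ i, p i → lo x ≤ F x i ∧ F x i ≤ hi x) :
    Tendsto (fun x => ⨆ (i) (_ : p i), F x i) l (𝓝 D) ∧
      Tendsto (fun x => ⨅ (i) (_ : p i), F x i) l (𝓝 D) := by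
  obtain ⟨i₀, hi₀⟩ := hp
  constructor
  · refine tendsto_of_tendsto_of_tendsto_of_le_of_le' hlo hhi ?_ ?_
    · filter_upwards [hF] with x hx
      exact (hx i₀ hi₀).1.trans (le_iSup₂ (f := fun i (_ : p i) => F x i) i₀ hi₀)
    · filter_upwards [hF] with x hx
      exact iSup₂_le fun i hi => (hx i hi).2
  · refine tendsto_of_tendsto_of_tendsto_of_le_of_le' hlo hhi ?_ ?_
    · filter_upwards [hF] with x hx
      exact le_iInf₂ fun i hi => (hx i hi).1
    · filter_upwards [hF] with x hx
      exact (iInf₂_le (f := fun i (_ : p i) => F x i) i₀ hi₀).trans (hx i₀ hi₀).2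

/-- The parameter set `Λ = {(a^j, bk, cm)}` of a regular shearlet system has uniform
shearlet density `D⁺(Λ,1) = D⁻(Λ,1) = 1/(b c² ln a)`. -/
theorem regular_shearlet_uniform_density (a b c : ℝ) (ha : 1 < a) (hb : 0 < b) (hc : 0 < c) :
    upperDensity {p : SG | ∃ (j k : ℤ) (m : ℤ × ℤ),
        p = ((a ^ j : ℝ), b * k, c * m.1, c * m.2)} (fun _ => 1)
      = ENNReal.ofReal (1 / (b * c ^ 2 * Real.log a)) ∧
    lowerDensity {p : SG | ∃ (j k : ℤ) (m : ℤ × ℤ),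
        p = ((a ^ j : ℝ), b * k, c * m.1, c * m.2)} (fun _ => 1)
      = ENNReal.ofReal (1 / (b * c ^ 2 * Real.log a)) := by
  let bound (s h : ℝ) : ℝ≥0∞ := ENNReal.ofReal
    ((h / log a + s) * ((h / b + s) * ((h / c + s) * (h / c + s))) / h ^ 4)
  have hsqueeze : ∀ᶠ h in atTop, ∀ g : SG, 0 < g.1 →
      bound (-1) h ≤
        wNum (range (latticePt a b c)) (fun _ => 1) (boxAt h g) / ENNReal.ofReal (h ^ 4) ∧
      wNum (range (latticePt a b c)) (fun _ => 1) (boxAt h g) / ENNReal.ofReal (h ^ 4) ≤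
        bound 1 h := by
    filter_upwards [eventually_ge_atTop (log a), eventually_ge_atTop b, eventually_ge_atTop c]
      with h haL hbh hch g hg
    have hh4 : 0 < h ^ 4 := pow_pos ((log_pos ha).trans_le haL) 4
    simp only [bound, wNum_range_latticePt_boxAt ha hb hc hg, ← ENNReal.ofReal_natCast,
      ← ENNReal.ofReal_div_of_pos hh4, ← sub_eq_add_neg]
    exact ⟨ENNReal.ofReal_le_ofReal (by gcongr; exact le_card_boxIndices ha hb hc g haL hbh hch),
      ENNReal.ofReal_le_ofReal (by gcongr; exact card_boxIndices_le ha hb hc g (hb.le.trans hbh))⟩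
  obtain ⟨hsup, hinf⟩ := tendsto_iSup_iInf_of_uniform_squeeze ⟨(1, 0, 0, 0), one_pos⟩
    (ENNReal.tendsto_ofReal (tendsto_prod_add_div_pow_four (-1)))
    (ENNReal.tendsto_ofReal (tendsto_prod_add_div_pow_four 1)) hsqueeze
  rw [← range_latticePt]
  exact ⟨hsup.limsup_eq, hinf.liminf_eq⟩

end
end

section
/- Let a > 1, b, c > 0, and let R_{j,k} = S_{bk} (the shear matrix) for all j,k ∈ ℤ. Let Λ = {(a^j, bk, c R_{j,k}^{-1} m) : j,k ∈ ℤ, m ∈ ℤ²} with weights w(a^j, bk, c R_{j,k}^{-1} m) = |det R_{j,k}|^{-1} = 1. Then Λ with weights w has uniform weighted shearlet density D⁺(Λ,w) = D⁻(Λ,w) = 1/(b c² ln a). -/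
open MeasureTheory Real Filter Set
open scoped ENNReal
noncomputable section

/-
Write `r = √(a^j / g₁)`. Translating back by `g⁻¹`, the point `(a^j, bk, c S_{bk}⁻¹ m)` lies in
`Q_h(g)` iff `j log a`, `bk`, `c m₂` and `c m₁` each lie in a half-open window of length `h`,
centred respectively at `log g₁`, at `g₂ r`, at `r g₄`, and at a point depending on `j, k, m₂`. The
constraints are triangular, so the number of points is an iterated count of lattice points in
windows; a window of length `h` contains between `h/s - 1` and `h/s + 1` points of `sℤ`, uniformly
in its centre. Hence `#(Λ ∩ Q_h(g))` lies between `∏ (h/sᵢ ∓ 1)` for `(sᵢ) = (log a, b, c, c)`,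
uniformly in `g`, and both bounds are `h⁴/(b c² log a) + O(h³)`.
-/

open Topology

def latticeWindow (s y h : ℝ) : Set ℤ := {n | s * n - y ∈ Ico (-h / 2) (h / 2)}

theorem Int.encard_Ico (m n : ℤ) : ((Ico m n).encard : ℝ≥0∞) = ENNReal.ofReal (n - m) := by
  rw [← Finset.coe_Ico, encard_coe_eq_coe_finsetCard, Int.card_Ico]
  rcases le_total m n with h | h
  · obtain ⟨k, hk⟩ := Int.eq_ofNat_of_zero_le (sub_nonneg.2 h)
    rw [← Int.cast_sub, hk]
    simp
  · rw [Int.toNat_of_nonpos (sub_nonpos.2 h),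
      ENNReal.ofReal_of_nonpos (by exact_mod_cast sub_nonpos.2 h)]
    simp

theorem latticeWindow_eq_Ico {s : ℝ} (hs : 0 < s) (y h : ℝ) :
    latticeWindow s y h = Ico ⌈(y - h / 2) / s⌉ ⌈(y + h / 2) / s⌉ := by
  ext n
  simp only [latticeWindow, mem_ofPred_eq, mem_Ico, Int.ceil_le, Int.lt_ceil, div_le_iff₀ hs,
    lt_div_iff₀ hs]
  constructor <;> rintro ⟨h₁, h₂⟩ <;> constructor <;> linarith

theorem encard_latticeWindow_le {s : ℝ} (hs : 0 < s) (y h : ℝ) :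
    ((latticeWindow s y h).encard : ℝ≥0∞) ≤ ENNReal.ofReal (h / s + 1) := by
  rw [latticeWindow_eq_Ico hs, Int.encard_Ico,
    show (y + h / 2) / s = (y - h / 2) / s + h / s by ring]
  exact ENNReal.ofReal_le_ofReal <| by
    linarith [Int.ceil_lt_add_one ((y - h / 2) / s + h / s), Int.le_ceil ((y - h / 2) / s)]

theorem le_encard_latticeWindow {s : ℝ} (hs : 0 < s) (y h : ℝ) :
    ENNReal.ofReal (h / s - 1) ≤ (latticeWindow s y h).encard := by
  rw [latticeWindow_eq_Ico hs, Int.encard_Ico,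
    show (y + h / 2) / s = (y - h / 2) / s + h / s by ring]
  exact ENNReal.ofReal_le_ofReal <| by
    linarith [Int.le_ceil ((y - h / 2) / s + h / s), Int.ceil_lt_add_one ((y - h / 2) / s)]

def depProd {α β : Type*} (P : Set α) (F : α → Set β) : Set (α × β) := {p | p.1 ∈ P ∧ p.2 ∈ F p.1}

section Fibers

variable {α β : Type*}

theorem encard_eq_tsum_encard_fiber (S : Set (α × β)) :
    (S.encard : ℝ≥0∞) = ∑' x, ((Prod.mk x ⁻¹' S).encard : ℝ≥0∞) := by
  rw [← ENNReal.tsum_set_one, tsum_subtype S fun _ => 1, ENNReal.tsum_prod']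
  congr 1 with x
  rw [← ENNReal.tsum_set_one, tsum_subtype _ fun _ => 1]
  rfl

theorem encard_depProd (P : Set α) (F : α → Set β) :
    ((depProd P F).encard : ℝ≥0∞) = ∑' x : P, ((F x).encard : ℝ≥0∞) := by
  rw [encard_eq_tsum_encard_fiber, tsum_subtype P fun x => ((F x).encard : ℝ≥0∞)]
  congr 1 with x
  by_cases hx : x ∈ P <;> simp [depProd, hx]

theorem encard_depProd_le {P : Set α} {F : α → Set β} {A U : ℝ≥0∞}
    (hP : (P.encard : ℝ≥0∞) ≤ A) (hF : ∀ x ∈ P, ((F x).encard : ℝ≥0∞) ≤ U) :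
    ((depProd P F).encard : ℝ≥0∞) ≤ A * U :=
  calc ((depProd P F).encard : ℝ≥0∞) ≤ ∑' _ : P, U := by
        rw [encard_depProd]; exact ENNReal.tsum_le_tsum fun x => hF x x.2
    _ ≤ A * U := by rw [ENNReal.tsum_set_const]; gcongr

theorem le_encard_depProd {P : Set α} {F : α → Set β} {A L : ℝ≥0∞}
    (hP : A ≤ P.encard) (hF : ∀ x ∈ P, L ≤ (F x).encard) :
    A * L ≤ (depProd P F).encard :=
  calc A * L ≤ ∑' _ : P, L := by rw [ENNReal.tsum_set_const]; gcongr
    _ ≤ _ := by rw [encard_depProd]; exact ENNReal.tsum_le_tsum fun x => hF x x.2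

end Fibers

/-- `invMul g p = g⁻¹ · p`. -/
def invMul (g p : SG) : SG :=
  let u := p.1 / g.1
  let v := p.2.1 - g.2.1 * √u
  (u, v, p.2.2 - Ss v (Aa u g.2.2))

theorem invMul_smul {g : SG} (hg : g.1 ≠ 0) (q : SG) : invMul g (smul g q) = q := by
  simp [invMul, smul, hg]

theorem smul_invMul {g : SG} (hg : g.1 ≠ 0) (p : SG) : smul g (invMul g p) = p := by
  simp [invMul, smul, hg]

theorem boxAt_eq_preimage {g : SG} (hg : g.1 ≠ 0) (h : ℝ) : boxAt h g = invMul g ⁻¹' Qbox h :=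
  congrFun (image_eq_preimage_of_inverse (invMul_smul hg) (smul_invMul hg)) (Qbox h)

/-- The point `(a^j, bk, c S_{bk}⁻¹ m)` of `Λ`, indexed by `(j, k, m₂, m₁)`. -/
def shearletPoint (a b c : ℝ) : ℤ × ℤ × ℤ × ℤ → SG
  | (j, k, n, m) => (a ^ j, b * k, c * (m - b * k * n), c * n)

theorem setOf_eq_range_shearletPoint (a b c : ℝ) :
    {p : SG | ∃ (j k : ℤ) (m : ℤ × ℤ),
        p = ((a ^ j : ℝ), b * k, c * ((m.1 : ℝ) - b * k * m.2), c * m.2)}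
      = range (shearletPoint a b c) := by
  ext p
  constructor
  · rintro ⟨j, k, m, rfl⟩
    exact ⟨(j, k, m.2, m.1), rfl⟩
  · rintro ⟨⟨j, k, n, m⟩, rfl⟩
    exact ⟨j, k, (m, n), rfl⟩

theorem shearletPoint_injective {a b c : ℝ} (ha₀ : 0 < a) (ha₁ : a ≠ 1) (hb : b ≠ 0) (hc : c ≠ 0) :
    Function.Injective (shearletPoint a b c) := by
  rintro ⟨j, k, n, m⟩ ⟨j', k', n', m'⟩ hv
  simp only [shearletPoint, Prod.mk.injEq, mul_right_inj' hb, mul_right_inj' hc,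
    Int.cast_inj] at hv
  obtain ⟨hj, rfl, hm, rfl⟩ := hv
  obtain rfl := zpow_right_injective₀ ha₀ ha₁ hj
  simp_all

theorem wNum_range_one {ι : Type*} {f : ι → SG} (hf : Function.Injective f) (K : Set SG) :
    wNum (range f) (fun _ => 1) K = (f ⁻¹' K).encard := by
  rw [wNum, ENNReal.ofReal_one, ENNReal.tsum_set_one, inter_comm,
    ← image_preimage_eq_inter_range, hf.encard_image]

theorem shearletPoint_preimage_boxAt {a : ℝ} (ha : 0 < a) (b c : ℝ) {g : SG} (hg : 0 < g.1)
    (h : ℝ) :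
    shearletPoint a b c ⁻¹' boxAt h g =
      depProd (latticeWindow (log a) (log g.1) h) fun j =>
        let r := √(a ^ j / g.1)
        depProd (latticeWindow b (g.2.1 * r) h) fun k =>
          depProd (latticeWindow c (r * g.2.2.2) h) fun n =>
            latticeWindow c
              (c * b * k * n + (Ss (b * k - g.2.1 * r) (Aa (a ^ j / g.1) g.2.2)).1) h := by
  ext ⟨j, k, n, m⟩
  have hu : 0 < a ^ j / g.1 := div_pos (zpow_pos ha j) hg
  have hshear (X : ℝ) : c * (m - b * k * n) - X = c * m - (c * b * k * n + X) := by ring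
  simp only [boxAt_eq_preimage hg.ne', mem_preimage, shearletPoint, invMul, Qbox, mem_prod,
    depProd, latticeWindow, mem_ofPred_eq, mem_Ico]
  rw [← le_log_iff_exp_le hu, ← log_lt_iff_lt_exp hu, log_div (zpow_pos ha j).ne' hg.ne',
    log_zpow, mul_comm (j : ℝ)]
  simp only [Prod.fst_sub, Prod.snd_sub, hshear, Ss, Aa]
  tauto

theorem encard_shearletPoint_preimage_boxAt_le {a b c : ℝ} (ha : 1 < a) (hb : 0 < b) (hc : 0 < c)
    {g : SG} (hg : 0 < g.1) (h : ℝ) :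
    ((shearletPoint a b c ⁻¹' boxAt h g).encard : ℝ≥0∞) ≤ ENNReal.ofReal (h / log a + 1) *
      (ENNReal.ofReal (h / b + 1) * (ENNReal.ofReal (h / c + 1) * ENNReal.ofReal (h / c + 1))) := by
  rw [shearletPoint_preimage_boxAt (by linarith) b c hg h]
  exact encard_depProd_le (encard_latticeWindow_le (log_pos ha) _ _) fun _ _ =>
    encard_depProd_le (encard_latticeWindow_le hb _ _) fun _ _ =>
      encard_depProd_le (encard_latticeWindow_le hc _ _) fun _ _ => encard_latticeWindow_le hc _ _

theorem le_encard_shearletPoint_preimage_boxAt {a b c : ℝ} (ha : 1 < a) (hb : 0 < b) (hc : 0 < c)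
    {g : SG} (hg : 0 < g.1) (h : ℝ) :
    ENNReal.ofReal (h / log a - 1) * (ENNReal.ofReal (h / b - 1) *
      (ENNReal.ofReal (h / c - 1) * ENNReal.ofReal (h / c - 1))) ≤
        (shearletPoint a b c ⁻¹' boxAt h g).encard := by
  rw [shearletPoint_preimage_boxAt (by linarith) b c hg h]
  exact le_encard_depProd (le_encard_latticeWindow (log_pos ha) _ _) fun _ _ =>
    le_encard_depProd (le_encard_latticeWindow hb _ _) fun _ _ =>
      le_encard_depProd (le_encard_latticeWindow hc _ _) fun _ _ => le_encard_latticeWindow hc _ _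

theorem tendsto_ofReal_prod_div_pow_four {p₀ p₁ p₂ p₃ : ℝ} (h₀ : 0 < p₀) (h₁ : 0 < p₁)
    (h₂ : 0 < p₂) (h₃ : 0 < p₃) (e : ℝ) :
    Tendsto (fun h : ℝ => ENNReal.ofReal (h / p₀ + e) * (ENNReal.ofReal (h / p₁ + e) *
        (ENNReal.ofReal (h / p₂ + e) * ENNReal.ofReal (h / p₃ + e))) / ENNReal.ofReal (h ^ 4))
      atTop (𝓝 (ENNReal.ofReal (1 / (p₀ * (p₁ * (p₂ * p₃)))))) := by
  have hfactor {p : ℝ} (hp : 0 < p) : Tendsto (fun h : ℝ => 1 / p + e / h) atTop (𝓝 (1 / p)) := by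
    simpa using tendsto_const_nhds.add (tendsto_const_nhds.div_atTop (tendsto_id (α := ℝ)))
  have hlim := (hfactor h₀).mul ((hfactor h₁).mul ((hfactor h₂).mul (hfactor h₃)))
  rw [show 1 / p₀ * (1 / p₁ * (1 / p₂ * (1 / p₃))) = 1 / (p₀ * (p₁ * (p₂ * p₃))) by field_simp]
    at hlim
  refine (ENNReal.tendsto_ofReal hlim).congr' ?_
  have hnonneg {p : ℝ} (hp : 0 < p) : ∀ᶠ h : ℝ in atTop, 0 ≤ h / p + e :=
    (((tendsto_id (α := ℝ)).atTop_div_const hp).atTop_add tendsto_const_nhds).eventually_ge_atTop 0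
  filter_upwards [eventually_gt_atTop 0, hnonneg h₀, hnonneg h₁, hnonneg h₂] with h hh e₀ e₁ e₂
  rw [← ENNReal.ofReal_mul e₂, ← ENNReal.ofReal_mul e₁, ← ENNReal.ofReal_mul e₀,
    ← ENNReal.ofReal_div_of_pos (by positivity)]
  congr 1
  field_simp

theorem upperDensity_eq_and_lowerDensity_eq_of_squeeze {Λ : Set SG} {w : SG → ℝ}
    {lo hi : ℝ → ℝ≥0∞} {L : ℝ≥0∞}
    (hlo : Tendsto (fun h => lo h / ENNReal.ofReal (h ^ 4)) atTop (𝓝 L))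
    (hhi : Tendsto (fun h => hi h / ENNReal.ofReal (h ^ 4)) atTop (𝓝 L))
    (hbound : ∀ h (g : SG), 0 < g.1 → lo h ≤ wNum Λ w (boxAt h g) ∧ wNum Λ w (boxAt h g) ≤ hi h) :
    upperDensity Λ w = L ∧ lowerDensity Λ w = L := by
  have hinf_le_sup (h : ℝ) :
      ⨅ (g : SG) (_ : 0 < g.1), wNum Λ w (boxAt h g) / ENNReal.ofReal (h ^ 4) ≤
        ⨆ (g : SG) (_ : 0 < g.1), wNum Λ w (boxAt h g) / ENNReal.ofReal (h ^ 4) :=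
    iInf₂_le_of_le (1, 0, 0, 0) one_pos (le_iSup₂_of_le (1, 0, 0, 0) one_pos le_rfl)
  have hlo_le_inf (h : ℝ) := le_iInf₂ fun g hg =>
    ENNReal.div_le_div_right (hbound h g hg).1 (ENNReal.ofReal (h ^ 4))
  have hsup_le_hi (h : ℝ) := iSup₂_le fun g hg =>
    ENNReal.div_le_div_right (hbound h g hg).2 (ENNReal.ofReal (h ^ 4))
  exact ⟨(tendsto_of_tendsto_of_tendsto_of_le_of_le hlo hhi
      (fun h => (hlo_le_inf h).trans (hinf_le_sup h)) hsup_le_hi).limsup_eq,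
    (tendsto_of_tendsto_of_tendsto_of_le_of_le hlo hhi hlo_le_inf
      (fun h => (hinf_le_sup h).trans (hsup_le_hi h))).liminf_eq⟩

/-- Oversampled shearlet system with `R_{j,k} = S_{bk}`: the parameter set
`Λ = {(a^j, bk, c S_{bk}⁻¹ m)}` with weights `w ≡ |det S_{bk}|⁻¹ = 1` has uniform weighted
shearlet density `1/(b c² ln a)`. Here `S_{bk}⁻¹ m = (m₁ − bk m₂, m₂)`. -/
theorem oversampled_shear_uniform_density (a b c : ℝ) (ha : 1 < a) (hb : 0 < b) (hc : 0 < c) :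
    upperDensity {p : SG | ∃ (j k : ℤ) (m : ℤ × ℤ),
        p = ((a ^ j : ℝ), b * k, c * ((m.1 : ℝ) - b * k * m.2), c * m.2)} (fun _ => 1)
      = ENNReal.ofReal (1 / (b * c ^ 2 * Real.log a)) ∧
    lowerDensity {p : SG | ∃ (j k : ℤ) (m : ℤ × ℤ),
        p = ((a ^ j : ℝ), b * k, c * ((m.1 : ℝ) - b * k * m.2), c * m.2)} (fun _ => 1)
      = ENNReal.ofReal (1 / (b * c ^ 2 * Real.log a)) := by
  have hla : 0 < log a := log_pos ha
  rw [setOf_eq_range_shearletPoint, show b * c ^ 2 * log a = log a * (b * (c * c)) by ring]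
  refine upperDensity_eq_and_lowerDensity_eq_of_squeeze
    (by simpa only [← sub_eq_add_neg] using tendsto_ofReal_prod_div_pow_four hla hb hc hc (-1))
    (tendsto_ofReal_prod_div_pow_four hla hb hc hc 1) fun h g hg => ?_
  rw [wNum_range_one (shearletPoint_injective (by linarith) ha.ne' hb.ne' hc.ne')]
  exact ⟨le_encard_shearletPoint_preimage_boxAt ha hb hc hg h,
    encard_shearletPoint_preimage_boxAt_le ha hb hc hg h⟩

end
end

section
/- Let a > 1, b, c > 0, and let Λ = {(a^j, bk, S_{bk} A_{a^j} c m) : j,k ∈ ℤ, m ∈ ℤ²} ⊂ S (the co-shearlet parameter set) with weight w ≡ 1. Then D⁺(Λ,w) = ∞ and D⁻(Λ,w) = 0. -/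
open MeasureTheory Real Filter Set
open scoped ENNReal
noncomputable section

/-!
At scale `a ^ j ≈ e^{-h/2}` the translations `a ^ j c ℤ` of `Λ` have spacing `≈ c e^{-h/2}`,
so the box `Q_h` around the identity already contains `≥ e^{h/2}` points of `Λ`, which beats `h⁴`.
The box around `(e^h, 0, c e^h / 2, 0)` only sees scales `a ^ j ≥ e^{h/2}`; there the vertical
translation `√(a ^ j) c m₂` forces `m₂ = 0`, after which the horizontal one becomes
`a ^ j c (m₁ - 1/2)`, of size `≥ a ^ j c / 2 > h / 2` because the box is centred halfway between
two lattice points. So these boxes miss `Λ` altogether.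
-/

open scoped Topology

lemma smul_zero_shear_left (x t : ℝ) (q : SG) :
    smul (x, 0, t, 0) q = (q.1 * x, q.2.1, q.2.2.1 + q.1 * t, q.2.2.2) := by
  simp [smul, Ss, Aa, Prod.ext_iff]

lemma boxAt_one (h : ℝ) : boxAt h (1, 0, 0, 0) = Qbox h := by
  simp [boxAt, smul_zero_shear_left]

lemma wNum_one_eq_encard (Λ K : Set SG) : wNum Λ (fun _ => 1) K = (Λ ∩ K).encard := by
  simp [wNum]

lemma wNum_eq_zero_of_disjoint {Λ K : Set SG} (w : SG → ℝ) (hΛK : Disjoint Λ K) :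
    wNum Λ w K = 0 := by
  simp [wNum, hΛK.inter_eq]

lemma upperDensity_eq_top_of_eventually_le {Λ : Set SG} {w : SG → ℝ} {φ : ℝ → ℝ≥0∞}
    (hφ : Tendsto φ atTop (𝓝 ⊤))
    (hle : ∀ᶠ h in atTop, ∃ g : SG, 0 < g.1 ∧
      φ h ≤ wNum Λ w (boxAt h g) / ENNReal.ofReal (h ^ 4)) :
    upperDensity Λ w = ⊤ := by
  refine top_unique (hφ.limsup_eq ▸ limsup_le_limsup (hle.mono fun h ⟨g, hg, hφg⟩ => ?_))
  exact hφg.trans (le_iSup₂_of_le g hg le_rfl)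

lemma lowerDensity_eq_zero_of_frequently_disjoint {Λ : Set SG} (w : SG → ℝ)
    (hdisj : ∃ᶠ h in atTop, ∃ g : SG, 0 < g.1 ∧ Disjoint Λ (boxAt h g)) :
    lowerDensity Λ w = 0 := by
  refine le_antisymm (liminf_le_of_frequently_le' (hdisj.mono fun h ⟨g, hg, hΛg⟩ => ?_)) bot_le
  exact iInf₂_le_of_le g hg (by simp [wNum_eq_zero_of_disjoint w hΛg])

lemma exists_zpow_mem_Ioc_mul {a x : ℝ} (ha : 1 < a) (hx : 0 < x) :
    ∃ j : ℤ, a ^ j ∈ Ioc x (a * x) := by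
  obtain ⟨n, hn, hn'⟩ := exists_mem_Ico_zpow hx ha
  refine ⟨n + 1, hn', ?_⟩
  rw [zpow_add_one₀ (by positivity), mul_comm]
  exact mul_le_mul_of_nonneg_left hn (by positivity)

def coshearletPoint (a b c : ℝ) (j k : ℤ) (m : ℤ × ℤ) : SG :=
  ((a ^ j : ℝ), b * k, Ss (b * k) (Aa (a ^ j) ((c * m.1 : ℝ), (c * m.2 : ℝ))))

def coshearletSet (a b c : ℝ) : Set SG :=
  {p | ∃ (j k : ℤ) (m : ℤ × ℤ), p = coshearletPoint a b c j k m}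

lemma coshearletPoint_zero_shear (a b c : ℝ) (j : ℤ) (n : ℤ) :
    coshearletPoint a b c j 0 (n, 0) = (a ^ j, 0, a ^ j * c * n, 0) := by
  simp [coshearletPoint, Ss, Aa, mul_assoc]

lemma ofReal_exp_le_wNum_coshearletSet_Qbox {a b c h : ℝ} (ha : 1 < a) (hc : 0 < c)
    (hah : log a < h) (hach : 2 * a * c ≤ h) :
    ENNReal.ofReal (exp (h / 2)) ≤ wNum (coshearletSet a b c) (fun _ => 1) (Qbox h) := by
  have ha0 : 0 < a := by linarith
  have hexp : exp (-h / 2) * exp (h / 2) = 1 := by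
    rw [← exp_add, neg_div, neg_add_cancel, exp_zero]
  obtain ⟨j, hj_gt, hj_le⟩ := exists_zpow_mem_Ioc_mul ha (exp_pos (-h / 2))
  have hj_lt : a ^ j < exp (h / 2) := by
    calc a ^ j ≤ a * exp (-h / 2) := hj_le
      _ < exp h * exp (-h / 2) := by gcongr; exact (log_lt_iff_lt_exp (by linarith)).1 hah
      _ = exp (h / 2) := by rw [← exp_add]; ring_nf
  set n := ⌈exp (h / 2)⌉₊
  let f : ℕ → SG := fun i => coshearletPoint a b c j 0 (i, 0)
  have hf : InjOn f (Finset.range n) := by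
    intro i _ i' _ hii'
    simpa [f, coshearletPoint_zero_shear, (zpow_pos ha0 j).ne', hc.ne'] using
      congrArg (fun p : SG => p.2.2.1) hii'
  have hmem : f '' (Finset.range n) ⊆ coshearletSet a b c ∩ Qbox h := by
    rintro _ ⟨i, hi_range, rfl⟩
    refine ⟨⟨j, 0, (i, 0), rfl⟩, ?_⟩
    have hi : (i : ℝ) < exp (h / 2) := Nat.lt_ceil.1 (Finset.mem_range.1 hi_range)
    have htrans : a ^ j * c * i < h / 2 := by
      calc a ^ j * c * i ≤ a * exp (-h / 2) * c * i := by gcongr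
        _ < a * exp (-h / 2) * c * exp (h / 2) := by gcongr
        _ = a * c := by linear_combination a * c * hexp
        _ ≤ h / 2 := by linarith
    have hh : 0 < h := lt_of_lt_of_le (by positivity) hach
    have : 0 ≤ a ^ j * c * i := by positivity
    simp only [f, coshearletPoint_zero_shear, Int.cast_natCast, Qbox, mem_prod, mem_Ico]
    exact ⟨⟨hj_gt.le, hj_lt⟩, ⟨by linarith, by linarith⟩, ⟨by linarith, htrans⟩,
      by linarith, by linarith⟩
  calc ENNReal.ofReal (exp (h / 2)) ≤ n := by
        rw [← ENNReal.ofReal_natCast]; exact ENNReal.ofReal_le_ofReal (Nat.le_ceil _)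
    _ = (f '' (Finset.range n)).encard := by
        rw [hf.encard_image, encard_coe_eq_coe_finsetCard]; simp
    _ ≤ (coshearletSet a b c ∩ Qbox h).encard := by gcongr
    _ = wNum (coshearletSet a b c) (fun _ => 1) (Qbox h) := (wNum_one_eq_encard _ _).symm

lemma le_abs_mul_intCast {x : ℝ} (hx : 0 ≤ x) {m : ℤ} (hm : m ≠ 0) : x ≤ |x * m| := by
  rw [abs_mul, abs_of_nonneg hx]
  exact le_mul_of_one_le_right hx (by exact_mod_cast Int.one_le_abs hm)

lemma half_le_abs_mul_intCast_sub_half {x : ℝ} (hx : 0 ≤ x) (m : ℤ) :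
    x / 2 ≤ |x * ((m : ℝ) - 1 / 2)| := by
  rw [abs_mul, abs_of_nonneg hx, div_eq_mul_one_div]
  refine mul_le_mul_of_nonneg_left ?_ hx
  rcases le_or_gt m 0 with hm | hm
  · have : (m : ℝ) ≤ 0 := by exact_mod_cast hm
    rw [abs_of_neg (by linarith)]; linarith
  · have : (1 : ℝ) ≤ m := by exact_mod_cast hm
    rw [abs_of_pos (by linarith)]; linarith

lemma disjoint_coshearletSet_boxAt {a b c h : ℝ} (hh : 0 ≤ h) (hch : h < c * exp (h / 4)) :
    Disjoint (coshearletSet a b c) (boxAt h (exp h, 0, c * exp h / 2, 0)) := by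
  rw [Set.disjoint_left]
  rintro _ ⟨j, k, m, rfl⟩ ⟨q, ⟨⟨hq1, -⟩, -, ⟨hq3, hq3'⟩, hq4, hq4'⟩, hqp⟩
  simp only [smul_zero_shear_left, coshearletPoint, Ss, Aa, Prod.ext_iff] at hqp
  obtain ⟨hscale, -, htrans, hq4_eq⟩ := hqp
  have hq3_abs : |q.2.2.1| ≤ h / 2 := abs_le.2 ⟨by linarith, hq3'.le⟩
  have hq4_abs : |q.2.2.2| ≤ h / 2 := abs_le.2 ⟨by linarith, hq4'.le⟩
  have hc : 0 < c := pos_of_mul_pos_left (hh.trans_lt hch) (exp_pos _).le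
  have hscale_ge : exp (h / 2) ≤ a ^ j := by
    calc exp (h / 2) = exp (-h / 2) * exp h := by rw [← exp_add]; ring_nf
      _ ≤ q.1 * exp h := by gcongr
      _ = a ^ j := hscale
  have haj : 0 < a ^ j := (exp_pos _).trans_le hscale_ge
  have hsqrt_ge : exp (h / 4) ≤ √(a ^ j) := by
    refine Real.le_sqrt_of_sq_le ?_
    calc exp (h / 4) ^ 2 = exp (h / 2) := by rw [← exp_nat_mul]; ring_nf
      _ ≤ a ^ j := hscale_ge
  have hm2 : m.2 = 0 := by
    by_contra hm2
    have := le_abs_mul_intCast (by positivity : 0 ≤ √(a ^ j) * c) hm2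
    rw [mul_assoc, ← hq4_eq] at this
    linarith [mul_le_mul_of_nonneg_right hsqrt_ge hc.le]
  have hq3_eq : q.2.2.1 = a ^ j * c * ((m.1 : ℝ) - 1 / 2) := by
    rw [hm2] at htrans
    linear_combination htrans - c / 2 * hscale
  have := half_le_abs_mul_intCast_sub_half (by positivity : 0 ≤ a ^ j * c) m.1
  rw [← hq3_eq] at this
  have hexp : exp (h / 4) ≤ exp (h / 2) := exp_le_exp.2 (by linarith)
  linarith [mul_le_mul_of_nonneg_left (hexp.trans hscale_ge) hc.le]

lemma tendsto_exp_half_div_pow_four :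
    Tendsto (fun h : ℝ => exp (h / 2) / h ^ 4) atTop atTop := by
  refine (tendsto_exp_mul_div_rpow_atTop 4 (1 / 2) one_half_pos).congr fun h => ?_
  rw [show (4 : ℝ) = (4 : ℕ) by norm_num, rpow_natCast]; ring_nf

lemma eventually_lt_mul_exp_div_four {c : ℝ} (hc : 0 < c) :
    ∀ᶠ h in atTop, h < c * exp (h / 4) := by
  filter_upwards [(isLittleO_pow_exp_pos_mul_atTop 1 (b := 1 / 4) (by norm_num)).bound
    (half_pos hc), eventually_ge_atTop 0] with h hbound hh
  rw [pow_one, norm_of_nonneg hh, norm_of_nonneg (exp_pos _).le, one_div_mul_eq_div] at hbound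
  linarith [mul_pos hc (exp_pos (h / 4))]

theorem coshearlet_density_general (a b c : ℝ) (ha : 1 < a) (hc : 0 < c) :
    upperDensity {p : SG | ∃ (j k : ℤ) (m : ℤ × ℤ),
        p = ((a ^ j : ℝ), b * k, Ss (b * k) (Aa (a ^ j) ((c * m.1 : ℝ), (c * m.2 : ℝ))))}
      (fun _ => 1) = ⊤ ∧
    lowerDensity {p : SG | ∃ (j k : ℤ) (m : ℤ × ℤ),
        p = ((a ^ j : ℝ), b * k, Ss (b * k) (Aa (a ^ j) ((c * m.1 : ℝ), (c * m.2 : ℝ))))}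
      (fun _ => 1) = 0 := by
  refine ⟨upperDensity_eq_top_of_eventually_le
    (ENNReal.tendsto_ofReal_atTop.comp tendsto_exp_half_div_pow_four) ?_,
    lowerDensity_eq_zero_of_frequently_disjoint _ (Eventually.frequently ?_)⟩
  · filter_upwards [eventually_gt_atTop 0, eventually_gt_atTop (log a),
      eventually_ge_atTop (2 * a * c)] with h hh hah hach
    refine ⟨(1, 0, 0, 0), one_pos, ?_⟩
    rw [Function.comp_apply, boxAt_one, ENNReal.ofReal_div_of_pos (by positivity)]
    gcongr
    exact ofReal_exp_le_wNum_coshearletSet_Qbox ha hc hah hach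
  · filter_upwards [eventually_ge_atTop 0, eventually_lt_mul_exp_div_four hc] with h hh hch
    exact ⟨_, exp_pos h, disjoint_coshearletSet_boxAt hh hch⟩

/-- The co-shearlet parameter set `Λ = {(a^j, bk, S_{bk} A_{a^j} cm)}` with weight `w ≡ 1`
satisfies `D⁺(Λ,w) = ∞` and `D⁻(Λ,w) = 0`. -/
theorem coshearlet_density (a b c : ℝ) (ha : 1 < a) (hb : 0 < b) (hc : 0 < c) :
    upperDensity {p : SG | ∃ (j k : ℤ) (m : ℤ × ℤ),
        p = ((a ^ j : ℝ), b * k, Ss (b * k) (Aa (a ^ j) ((c * m.1 : ℝ), (c * m.2 : ℝ))))}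
      (fun _ => 1) = ⊤ ∧
    lowerDensity {p : SG | ∃ (j k : ℤ) (m : ℤ × ℤ),
        p = ((a ^ j : ℝ), b * k, Ss (b * k) (Aa (a ^ j) ((c * m.1 : ℝ), (c * m.2 : ℝ))))}
      (fun _ => 1) = 0 :=
  coshearlet_density_general a b c ha hc

end
end

section
/- Let δ > 0, R' > 1, and set R := (1+δ/2)² e^δ R' + δ(1+δ/2)² e^δ + δ. Then for any (p,q,r) ∈ S: if Q_δ(p,q,r) \ Q_R ≠ ∅, then Q_δ(p,q,r) ∩ Q_{R'} = ∅. -/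
open MeasureTheory Real Filter Set
open scoped ENNReal
noncomputable section

/-! If `g · u ∈ Q_{R'}` for some `u ∈ Q_δ`, then with `M = (R' + δ)/2` the entries of
`g = (a, s, t₁, t₂)` satisfy `|log a| ≤ M`, `|s| √u₁ ≤ M`, `|t₂| √u₁ ≤ M` and
`|t₁| u₁ ≤ (1 + δ/2) M`. Any other `v ∈ Q_δ` has `v₁ ≤ e^δ u₁`, so the same bounds hold with
`v₁` in place of `u₁` up to factors `e^{δ/2}` and `e^δ`; adding the entries of `v`, every
coordinate of `g · v` stays strictly inside `R/2 = (1 + δ/2)² e^δ M + δ/2`. Hence `Q_δ(g)` lies in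
`Q_R` as soon as it meets `Q_{R'}`. -/

theorem smul_mk (a s t₁ t₂ u₁ u₂ u₃ u₄ : ℝ) :
    smul (a, s, t₁, t₂) (u₁, u₂, u₃, u₄) =
      (u₁ * a, u₂ + s * √u₁, u₃ + (u₁ * t₁ + u₂ * (√u₁ * t₂)), u₄ + √u₁ * t₂) :=
  rfl

section RealBounds

variable {h x y l w z c B ε : ℝ}

theorem abs_le_of_mem_Ico_half (hx : x ∈ Ico (-h/2) (h/2)) : |x| ≤ h/2 :=
  abs_le.2 ⟨by linarith [hx.1], hx.2.le⟩

theorem mem_Ico_half_of_abs_lt (hx : |x| < h/2) : x ∈ Ico (-h/2) (h/2) :=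
  ⟨by linarith [(abs_lt.1 hx).1], (abs_lt.1 hx).2⟩

theorem abs_log_le_of_mem_Ico_exp (hx : x ∈ Ico (exp (-h/2)) (exp (h/2))) :
    0 < x ∧ |log x| ≤ h/2 := by
  have hx₀ : 0 < x := (exp_pos _).trans_le hx.1
  refine ⟨hx₀, abs_le.2 ⟨?_, ((log_lt_iff_lt_exp hx₀).2 hx.2).le⟩⟩
  rw [le_log_iff_exp_le hx₀, ← neg_div]
  exact hx.1

theorem mem_Ico_exp_of_abs_log_lt (hx₀ : 0 < x) (hx : |log x| < h/2) :
    x ∈ Ico (exp (-h/2)) (exp (h/2)) := by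
  obtain ⟨hlo, hhi⟩ := abs_lt.1 hx
  refine ⟨?_, (log_lt_iff_lt_exp hx₀).1 hhi⟩
  rw [neg_div, ← le_log_iff_exp_le hx₀]
  exact hlo.le

theorem le_exp_mul_of_abs_log_le (hx : 0 < x) (hy : 0 < y) (hlx : |log x| ≤ h/2)
    (hly : |log y| ≤ h/2) : y ≤ exp h * x :=
  calc y = exp (log y) := (exp_log hy).symm
    _ ≤ exp (h + log x) := exp_le_exp.2 (by linarith [abs_le.1 hlx, abs_le.1 hly])
    _ = exp h * x := by rw [exp_add, exp_log hx]

theorem sqrt_le_exp_half_mul_sqrt (hyx : y ≤ exp h * x) : √y ≤ exp (h/2) * √x :=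
  calc √y ≤ √(exp h * x) := sqrt_le_sqrt hyx
    _ = exp (h/2) * √x := by rw [sqrt_mul (exp_pos h).le, exp_half]

theorem abs_le_add_of_abs_add_le (hwz : |w + z| ≤ B) (hw : |w| ≤ ε) : |z| ≤ B + ε :=
  calc |z| = |(w + z) - w| := by rw [add_sub_cancel_left]
    _ ≤ |w + z| + |w| := abs_sub _ _
    _ ≤ B + ε := add_le_add hwz hw

theorem abs_mul_le_of_le_mul (hy : 0 ≤ y) (hl : 0 ≤ l) (hyx : y ≤ l * x) (hxc : |x * c| ≤ B) :
    |y * c| ≤ l * B :=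
  calc |y * c| = y * |c| := by rw [abs_mul, abs_of_nonneg hy]
    _ ≤ l * |x| * |c| := by gcongr; exact hyx.trans (mul_le_mul_of_nonneg_left (le_abs_self x) hl)
    _ = l * |x * c| := by rw [abs_mul, mul_assoc]
    _ ≤ l * B := mul_le_mul_of_nonneg_left hxc hl

end RealBounds

theorem pos_of_mem_Qbox {h : ℝ} {x : SG} (hx : x ∈ Qbox h) : 0 < h := by
  have := hx.2.1.1.trans_lt hx.2.1.2
  linarith

theorem abs_le_of_mem_Qbox {h a s t₁ t₂ : ℝ} (hx : (a, s, t₁, t₂) ∈ Qbox h) :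
    0 < a ∧ |log a| ≤ h/2 ∧ |s| ≤ h/2 ∧ |t₁| ≤ h/2 ∧ |t₂| ≤ h/2 := by
  obtain ⟨ha, hs, ht₁, ht₂⟩ := hx
  exact ⟨(abs_log_le_of_mem_Ico_exp ha).1, (abs_log_le_of_mem_Ico_exp ha).2,
    abs_le_of_mem_Ico_half hs, abs_le_of_mem_Ico_half ht₁, abs_le_of_mem_Ico_half ht₂⟩

theorem mem_Qbox_of_abs_lt {h a s t₁ t₂ : ℝ} (ha : 0 < a) (hla : |log a| < h/2)
    (hs : |s| < h/2) (ht₁ : |t₁| < h/2) (ht₂ : |t₂| < h/2) : (a, s, t₁, t₂) ∈ Qbox h :=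
  ⟨mem_Ico_exp_of_abs_log_lt ha hla, mem_Ico_half_of_abs_lt hs, mem_Ico_half_of_abs_lt ht₁,
    mem_Ico_half_of_abs_lt ht₂⟩

theorem abs_bounds_of_smul_mem_Qbox {δ R' a s t₁ t₂ u₁ u₂ u₃ u₄ : ℝ}
    (hu : (u₁, u₂, u₃, u₄) ∈ Qbox δ) (hx : smul (a, s, t₁, t₂) (u₁, u₂, u₃, u₄) ∈ Qbox R') :
    0 < a ∧ |log a| ≤ (R' + δ)/2 ∧ |s * √u₁| ≤ (R' + δ)/2 ∧
      |u₁ * t₁| ≤ (1 + δ/2) * ((R' + δ)/2) ∧ |√u₁ * t₂| ≤ (R' + δ)/2 := by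
  obtain ⟨hu₁, hlu, hu₂, hu₃, hu₄⟩ := abs_le_of_mem_Qbox hu
  rw [smul_mk] at hx
  obtain ⟨hx₁, hlx, hx₂, hx₃, hx₄⟩ := abs_le_of_mem_Qbox hx
  have ha : 0 < a := pos_of_mul_pos_right hx₁ hu₁.le
  have ht₂ : |√u₁ * t₂| ≤ (R' + δ)/2 := by linarith [abs_le_add_of_abs_add_le hx₄ hu₄]
  refine ⟨ha, ?_, by linarith [abs_le_add_of_abs_add_le hx₂ hu₂], ?_, ht₂⟩
  · rw [log_mul hu₁.ne' ha.ne'] at hlx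
    linarith [abs_le_add_of_abs_add_le hlx hlu]
  · have hsum := abs_le_add_of_abs_add_le hx₃ hu₃
    rw [add_comm] at hsum
    have hshear : |u₂ * (√u₁ * t₂)| ≤ δ/2 * ((R' + δ)/2) := by
      rw [abs_mul]
      exact mul_le_mul hu₂ ht₂ (abs_nonneg _) ((abs_nonneg _).trans hu₂)
    linarith [abs_le_add_of_abs_add_le hsum hshear]

theorem exp_mul_add_lt {δ : ℝ} (hδ : 0 < δ) :
    exp δ * (1 + δ/2) + δ/2 * exp (δ/2) < (1 + δ/2) ^ 2 * exp δ := by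
  have hexp : exp (δ/2) < (1 + δ/2) * exp δ :=
    (exp_lt_exp.2 (by linarith)).trans_le (le_mul_of_one_le_left (exp_pos δ).le (by linarith))
  nlinarith [mul_lt_mul_of_pos_left hexp (half_pos hδ)]

theorem smul_mem_Qbox_of_abs_bounds {δ M a s t₁ t₂ u₁ v₁ v₂ v₃ v₄ : ℝ} (hM : 0 < M)
    (hu₁ : 0 < u₁) (hlu : |log u₁| ≤ δ/2) (hv : (v₁, v₂, v₃, v₄) ∈ Qbox δ)
    (ha : 0 < a) (hla : |log a| ≤ M) (hs : |s * √u₁| ≤ M) (ht₁ : |u₁ * t₁| ≤ (1 + δ/2) * M)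
    (ht₂ : |√u₁ * t₂| ≤ M) :
    smul (a, s, t₁, t₂) (v₁, v₂, v₃, v₄) ∈ Qbox (2 * ((1 + δ/2) ^ 2 * exp δ * M) + δ) := by
  obtain ⟨hv₁, hlv, hv₂, hv₃, hv₄⟩ := abs_le_of_mem_Qbox hv
  have hδ : 0 < δ := pos_of_mem_Qbox hv
  have hvu : v₁ ≤ exp δ * u₁ := le_exp_mul_of_abs_log_le hu₁ hv₁ hlu hlv
  have hsqrt : √v₁ ≤ exp (δ/2) * √u₁ := sqrt_le_exp_half_mul_sqrt hvu
  have hs' : |s * √v₁| ≤ exp (δ/2) * M := by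
    rw [mul_comm] at hs ⊢
    exact abs_mul_le_of_le_mul (sqrt_nonneg _) (exp_pos _).le hsqrt hs
  have ht₂' : |√v₁ * t₂| ≤ exp (δ/2) * M :=
    abs_mul_le_of_le_mul (sqrt_nonneg _) (exp_pos _).le hsqrt ht₂
  have ht₁' : |v₁ * t₁| ≤ exp δ * ((1 + δ/2) * M) :=
    abs_mul_le_of_le_mul hv₁.le (exp_pos _).le hvu ht₁
  have hshear : |v₂ * (√v₁ * t₂)| ≤ δ/2 * (exp (δ/2) * M) := by
    rw [abs_mul]
    exact mul_le_mul hv₂ ht₂' (abs_nonneg _) (half_pos hδ).le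
  have hK := mul_lt_mul_of_pos_right (exp_mul_add_lt hδ) hM
  have hexp : exp (δ/2) ≤ exp δ * (1 + δ/2) :=
    (exp_le_exp.2 (by linarith)).trans (le_mul_of_one_le_right (exp_pos δ).le (by linarith))
  have hM_le : M ≤ exp (δ/2) * M := le_mul_of_one_le_left hM.le (one_le_exp (half_pos hδ).le)
  have hexpM : exp (δ/2) * M ≤ exp δ * (1 + δ/2) * M := mul_le_mul_of_nonneg_right hexp hM.le
  have hshearM : 0 ≤ δ/2 * exp (δ/2) * M := by positivity
  rw [smul_mk]
  refine mem_Qbox_of_abs_lt (mul_pos hv₁ ha) ?_ ?_ ?_ ?_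
  · rw [log_mul hv₁.ne' ha.ne']
    linarith [abs_add_le (log v₁) (log a)]
  · linarith [abs_add_le v₂ (s * √v₁)]
  · linarith [abs_add_le v₃ (v₁ * t₁ + v₂ * (√v₁ * t₂)), abs_add_le (v₁ * t₁) (v₂ * (√v₁ * t₂))]
  · linarith [abs_add_le v₄ (√v₁ * t₂)]

theorem boxAt_subset_Qbox_of_inter_nonempty {δ R' : ℝ} {g : SG}
    (h : (boxAt δ g ∩ Qbox R').Nonempty) :
    boxAt δ g ⊆ Qbox ((1 + δ/2) ^ 2 * exp δ * R' + δ * (1 + δ/2) ^ 2 * exp δ + δ) := by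
  obtain ⟨a, s, t₁, t₂⟩ := g
  obtain ⟨_, ⟨⟨u₁, u₂, u₃, u₄⟩, hu, rfl⟩, hx⟩ := h
  rintro _ ⟨⟨v₁, v₂, v₃, v₄⟩, hv, rfl⟩
  obtain ⟨hu₁, hlu, -⟩ := abs_le_of_mem_Qbox hu
  obtain ⟨ha, hla, hs, ht₁, ht₂⟩ := abs_bounds_of_smul_mem_Qbox hu hx
  have hM : 0 < (R' + δ)/2 := by linarith [pos_of_mem_Qbox hu, pos_of_mem_Qbox hx]
  convert smul_mem_Qbox_of_abs_bounds hM hu₁ hlu hv ha hla hs ht₁ ht₂ using 2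
  ring

theorem box_separation_general (δ R' : ℝ) (p : SG)
    (hne : (boxAt δ p \ Qbox ((1 + δ/2) ^ 2 * Real.exp δ * R'
        + δ * (1 + δ/2) ^ 2 * Real.exp δ + δ)).Nonempty) :
    boxAt δ p ∩ Qbox R' = ∅ := by
  by_contra hmeet
  obtain ⟨x, hx, hxR⟩ := hne
  exact hxR (boxAt_subset_Qbox_of_inter_nonempty (nonempty_iff_ne_empty.2 hmeet) hx)

/-- For `δ > 0`, `R' > 1` and `R = (1+δ/2)² e^δ R' + δ(1+δ/2)² e^δ + δ`: if
`Q_δ(p,q,r) \ Q_R ≠ ∅`, then `Q_δ(p,q,r) ∩ Q_{R'} = ∅`. -/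
theorem box_separation (δ R' : ℝ) (hδ : 0 < δ) (hR' : 1 < R') (p : SG) (hp : 0 < p.1)
    (hne : (boxAt δ p \ Qbox ((1 + δ/2) ^ 2 * Real.exp δ * R'
        + δ * (1 + δ/2) ^ 2 * Real.exp δ + δ)).Nonempty) :
    boxAt δ p ∩ Qbox R' = ∅ :=
  box_separation_general δ R' p hne

end
end

section
/- Let (a,s,t) ∈ Q_1(e^j, k e^{−1/4}, e^{−1/2} m) for j,k ∈ ℤ, m ∈ ℤ². Then: (C1) e^{j−1/2} ≤ a ≤ e^{j+1/2}; (C2) |k|/√e − 1/2 ≤ |s| ≤ |k| + 1/2; and if additionally ‖m‖_∞ > 3e/2 then ‖t‖_∞ ≥ ‖m‖_∞/(3e). -/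
open MeasureTheory Real Filter Set
open scoped ENNReal
noncomputable section

/-! Write the point of `Q_1` as `(e^u, y, z)` with `|u|, |y|, ‖z‖ ≤ 1/2` (the norm on `ℝ × ℝ` is
the sup-norm). Then `a = e^{u+j}` and `s = y + k e^{u/2 - 1/4}`, which gives (C1) and (C2). For (C3),
`t = z + S_y A_{e^u} (e^{-1/2} m)`; `‖A_{e^u} v‖ ≥ e^{-1/2} ‖v‖`, and
`S_y⁻¹ = S_{-y}` has norm at most `1 + |y| ≤ 3/2`, so `‖t‖ ≥ 2‖m‖/(3e) - 1/2 ≥ ‖m‖/(3e)` as soon as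
`‖m‖ ≥ 3e/2`. -/

lemma Ss_neg_Ss (s : ℝ) (w : ℝ × ℝ) : Ss (-s) (Ss s w) = w := by
  simp [Ss]

lemma norm_Ss_le (s : ℝ) (w : ℝ × ℝ) : ‖Ss s w‖ ≤ (1 + |s|) * ‖w‖ := by
  have h₁ : |w.1| ≤ ‖w‖ := le_max_left _ _
  have h₂ : |w.2| ≤ ‖w‖ := le_max_right _ _
  rw [Ss, Prod.norm_mk, Real.norm_eq_abs, Real.norm_eq_abs]
  refine max_le ?_ ?_
  · calc |w.1 + s * w.2| ≤ |w.1| + |s| * |w.2| := (abs_add_le _ _).trans_eq (by rw [abs_mul])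
      _ ≤ (1 + |s|) * ‖w‖ := by nlinarith [abs_nonneg s]
  · nlinarith [abs_nonneg s, norm_nonneg w]

lemma norm_le_mul_norm_Ss (s : ℝ) (w : ℝ × ℝ) : ‖w‖ ≤ (1 + |s|) * ‖Ss s w‖ := by
  simpa only [Ss_neg_Ss, abs_neg] using norm_Ss_le (-s) (Ss s w)

lemma mul_norm_le_norm_Aa {a c : ℝ} (hc : 0 ≤ c) (hca : c ≤ a) (hcs : c ≤ √a) (w : ℝ × ℝ) :
    c * ‖w‖ ≤ ‖Aa a w‖ := by
  rw [Aa, Prod.norm_def, Prod.norm_mk, mul_max_of_nonneg _ _ hc]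
  simp only [Real.norm_eq_abs, abs_mul, abs_of_nonneg (hc.trans hca), abs_of_nonneg (sqrt_nonneg a)]
  gcongr

lemma mul_norm_div_sub_le_norm_add_Ss_Aa {a c : ℝ} (hc : 0 ≤ c) (hca : c ≤ a) (hcs : c ≤ √a)
    (y : ℝ) (w z : ℝ × ℝ) : c * ‖w‖ / (1 + |y|) - ‖z‖ ≤ ‖z + Ss y (Aa a w)‖ := by
  have hSs : c * ‖w‖ / (1 + |y|) ≤ ‖Ss y (Aa a w)‖ := by
    rw [div_le_iff₀' (by positivity)]
    exact (mul_norm_le_norm_Aa hc hca hcs w).trans (norm_le_mul_norm_Ss y _)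
  have := norm_le_add_norm_add (Ss y (Aa a w)) z
  rw [add_comm (Ss y (Aa a w)) z] at this
  linarith

lemma abs_add_mul_mem_Icc {y c δ lo hi : ℝ} (k : ℝ) (hy : |y| ≤ δ) (hlo : 0 ≤ lo)
    (hc : c ∈ Icc lo hi) : |y + k * c| ∈ Icc (|k| * lo - δ) (|k| * hi + δ) := by
  have hkc : |k * c| = |k| * c := by rw [abs_mul, abs_of_nonneg (hlo.trans hc.1)]
  constructor
  · have := abs_sub_abs_le_abs_add (k * c) y
    rw [add_comm] at this
    nlinarith [abs_nonneg k, hc.1]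
  · have := abs_add_le y (k * c)
    nlinarith [abs_nonneg k, hc.2]

lemma exists_eq_smul_of_mem_boxAt {h : ℝ} {g p : SG} (hp : p ∈ boxAt h g) :
    ∃ u y, ∃ z : ℝ × ℝ, |u| ≤ h / 2 ∧ |y| ≤ h / 2 ∧ ‖z‖ ≤ h / 2 ∧ p = smul g (exp u, y, z) := by
  obtain ⟨⟨x, y, z₁, z₂⟩, ⟨⟨hx₁, hx₂⟩, ⟨hy₁, hy₂⟩, ⟨hz₁, hz₁'⟩, hz₂, hz₂'⟩, rfl⟩ := hp
  have hx : 0 < x := (exp_pos _).trans_le hx₁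
  refine ⟨log x, y, (z₁, z₂), abs_le.2 ⟨?_, ?_⟩, abs_le.2 ⟨by linarith, hy₂.le⟩, ?_, by rw [exp_log hx]⟩
  · exact (le_log_iff_exp_le hx).2 (by rwa [← neg_div])
  · exact (log_le_iff_le_exp hx).2 hx₂.le
  · rw [Prod.norm_mk, Real.norm_eq_abs, Real.norm_eq_abs]
    exact max_le (abs_le.2 ⟨by linarith, hz₁'.le⟩) (abs_le.2 ⟨by linarith, hz₂'.le⟩)

/-- If `(a,s,t) ∈ Q_1(e^j, k e^{−1/4}, e^{−1/2} m)`, then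
(C1) `e^{j−1/2} ≤ a ≤ e^{j+1/2}`; (C2) `|k|/√e − 1/2 ≤ |s| ≤ |k| + 1/2`; and
if `‖m‖_∞ > 3e/2` then `‖t‖_∞ ≥ ‖m‖_∞/(3e)`. -/
theorem box_membership_estimates (j k : ℤ) (m : ℤ × ℤ) (a s : ℝ) (t : ℝ × ℝ)
    (hmem : (a, s, t.1, t.2) ∈ boxAt 1 (Real.exp (j : ℝ), (k : ℝ) * Real.exp (-(1:ℝ)/4),
      Real.exp (-(1:ℝ)/2) * m.1, Real.exp (-(1:ℝ)/2) * m.2)) :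
    (Real.exp ((j : ℝ) - 1/2) ≤ a ∧ a ≤ Real.exp ((j : ℝ) + 1/2)) ∧
    (|(k : ℝ)| / Real.sqrt (Real.exp 1) - 1/2 ≤ |s| ∧ |s| ≤ |(k : ℝ)| + 1/2) ∧
    (max |(m.1 : ℝ)| |(m.2 : ℝ)| > 3 * Real.exp 1 / 2 →
      max |t.1| |t.2| ≥ max |(m.1 : ℝ)| |(m.2 : ℝ)| / (3 * Real.exp 1)) := by
  obtain ⟨u, y, z, hu, hy, hz, hp⟩ := exists_eq_smul_of_mem_boxAt hmem
  simp only [smul, Prod.mk.injEq] at hp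
  obtain ⟨rfl, rfl, ht⟩ := hp
  obtain ⟨hu₁, hu₂⟩ := abs_le.1 hu
  refine ⟨⟨?_, ?_⟩, ?_, fun hM => ?_⟩
  · rw [← exp_add]; exact exp_le_exp.2 (by linarith)
  · rw [← exp_add]; exact exp_le_exp.2 (by linarith)
  · have hc : exp (-1 / 4) * exp (u / 2) ∈ Icc (exp (-(1 / 2))) 1 := by
      rw [← exp_add]; exact ⟨exp_le_exp.2 (by linarith), exp_le_one_iff.2 (by linarith)⟩
    rw [mul_assoc, ← exp_half, ← exp_half, div_eq_mul_inv, ← exp_neg]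
    simpa only [mul_one, mem_Icc] using abs_add_mul_mem_Icc (k : ℝ) hy (exp_pos _).le hc
  · set M := max |(m.1 : ℝ)| |(m.2 : ℝ)|
    have hnorm_m : ‖((m.1 : ℝ), (m.2 : ℝ))‖ = M := by
      rw [Prod.norm_mk, Real.norm_eq_abs, Real.norm_eq_abs]
    have hcs : exp (-1 / 2) ≤ √(exp u) := by rw [← exp_half]; exact exp_le_exp.2 (by linarith)
    have key := mul_norm_div_sub_le_norm_add_Ss_Aa (exp_pos _).le (exp_le_exp.2 (by linarith)) hcs
      y (exp (-1 / 2) • ((m.1 : ℝ), (m.2 : ℝ))) z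
    rw [norm_smul, hnorm_m, norm_of_nonneg (exp_pos _).le, ← mul_assoc, ← exp_add, Prod.smul_mk,
      smul_eq_mul, smul_eq_mul, ← ht, Prod.norm_mk, Real.norm_eq_abs, Real.norm_eq_abs] at key
    have hM' : 1 / 2 < M / (3 * exp 1) := by rw [lt_div_iff₀ (by positivity)]; linarith
    calc M / (3 * exp 1) ≤ exp (-1) * M / (3 / 2) - 1 / 2 := by
          rw [exp_neg]; ring_nf at hM' ⊢; linarith
      _ ≤ exp (-1 / 2 + -1 / 2) * M / (1 + |y|) - ‖z‖ := by
          norm_num only; gcongr; linarith [abs_le.1 hy]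
      _ ≤ max |t.1| |t.2| := key

end
end
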